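/- arXiv:2403.10311 — 9 statements merged into one kernel-verified Lean document; each statement's English description precedes it below -/
import Mathlib

section
/- Let χ be a chirotope on a finite set X (a sign function satisfying symmetry, interiority, and transitivity). An element t ∈ X is not extreme in χ if and only if there exist distinct a, b, c ∈ X \ {t} such that χ(t,a,b) = χ(t,b,c) = χ(t,c,a) = 1. -/
/-- A sign function: defined on triples of pairwise distinct elements, with
values in `{-1, +1}`, alternating under permutations of the arguments. -/
def SignFn {X : Type*} (χ : X → X → X → ℤ) : Prop :=
  ∀ x y z : X, x ≠ y → y ≠ z → x ≠ z →
    (χ x y z = 1 ∨ χ x y z = -1) ∧ χ x y z = χ y z x ∧ χ x y z = -χ y x z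

/-- The interiority axiom of chirotopes. -/
def Interiority {X : Type*} (χ : X → X → X → ℤ) : Prop :=
  ∀ t x y z : X, t ≠ x → t ≠ y → t ≠ z → x ≠ y → x ≠ z → y ≠ z →
    χ t y z = 1 → χ x t z = 1 → χ x y t = 1 → χ x y z = 1

/-- The transitivity axiom of chirotopes. -/
def Transitivity {X : Type*} (χ : X → X → X → ℤ) : Prop :=
  ∀ s t x y z : X, s ≠ t → s ≠ x → s ≠ y → s ≠ z → t ≠ x → t ≠ y → t ≠ z →
      x ≠ y → x ≠ z → y ≠ z →
    χ t s x = 1 → χ t s y = 1 → χ t s z = 1 → χ x y t = 1 → χ y z t = 1 →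
      χ x z t = 1

/-- A chirotope: a sign function satisfying interiority and transitivity. -/
def Chirotope {X : Type*} (χ : X → X → X → ℤ) : Prop :=
  SignFn χ ∧ Interiority χ ∧ Transitivity χ

/-- `x` is extreme in `χ`: there is `y ≠ x` such that `χ x y z` takes the same
value for all `z ∉ {x, y}`. -/
def ExtremeIn {X : Type*} (χ : X → X → X → ℤ) (x : X) : Prop :=
  ∃ y, y ≠ x ∧ ∃ c : ℤ, ∀ z, z ≠ x → z ≠ y → χ x y z = c

section Aux

variable {X : Type*} {χ : X → X → X → ℤ}

private lemma sgn_pm (hs : SignFn χ) {x y z : X} (hxy : x ≠ y) (hyz : y ≠ z)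
    (hxz : x ≠ z) : χ x y z = 1 ∨ χ x y z = -1 :=
  (hs x y z hxy hyz hxz).1

private lemma sgn_cyc (hs : SignFn χ) {x y z : X} (hxy : x ≠ y) (hyz : y ≠ z)
    (hxz : x ≠ z) : χ x y z = χ y z x :=
  (hs x y z hxy hyz hxz).2.1

private lemma sgn_sw12 (hs : SignFn χ) {x y z : X} (hxy : x ≠ y) (hyz : y ≠ z)
    (hxz : x ≠ z) : χ x y z = -χ y x z :=
  (hs x y z hxy hyz hxz).2.2

private lemma sgn_cyc2 (hs : SignFn χ) {x y z : X} (hxy : x ≠ y) (hyz : y ≠ z)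
    (hxz : x ≠ z) : χ x y z = χ z x y := by
  have h1 := sgn_cyc hs hxy hyz hxz
  have h2 := sgn_cyc hs hyz hxz.symm hxy.symm
  linarith

private lemma sgn_sw23 (hs : SignFn χ) {x y z : X} (hxy : x ≠ y) (hyz : y ≠ z)
    (hxz : x ≠ z) : χ x y z = -χ x z y := by
  have h1 := sgn_cyc hs hxz hyz.symm hxy
  have h2 := sgn_sw12 hs hyz.symm hxy.symm hxz.symm
  have h3 := sgn_cyc hs hxy hyz hxz
  linarith

private lemma sgn_sw13 (hs : SignFn χ) {x y z : X} (hxy : x ≠ y) (hyz : y ≠ z)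
    (hxz : x ≠ z) : χ x y z = -χ z y x := by
  have h1 := sgn_cyc hs hxy hyz hxz
  have h2 := sgn_sw12 hs hyz hxz.symm hxy.symm
  linarith

/-- The mixed case of the five-point lemma: `χ s x y = 1` and `χ s z x = -1`. -/
private lemma pair_case (hs : SignFn χ) (htr : Transitivity χ) {t s x y z : X}
    (hts : t ≠ s) (htx : t ≠ x) (hty : t ≠ y) (htz : t ≠ z)
    (hsx : s ≠ x) (hsy : s ≠ y) (hsz : s ≠ z)
    (hxy : x ≠ y) (hxz : x ≠ z) (hyz : y ≠ z)
    (h1 : χ t x y = 1) (h3 : χ t z x = 1) (h4 : χ t x s = 1)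
    (hf : χ x y z = 1) (e1 : χ s x y = 1) (e3 : χ s z x = -1) : False := by
  -- transitivity with (s,t,x,y,z) := (y, x, t, z, s)
  have a1 : χ x y t = 1 := by
    have := sgn_cyc2 hs hxy hty.symm htx.symm; linarith
  have a3 : χ x y s = 1 := by
    have := sgn_cyc2 hs hxy hsy.symm hsx.symm; linarith
  have a5 : χ z s x = 1 := by
    have hc := sgn_cyc hs hsz.symm hsx hxz.symm
    have hw := sgn_sw23 hs hsx hxz hsz
    linarith
  have conc : χ t s x = 1 :=
    htr y x t z s hxy.symm hty.symm hyz hsy.symm htx.symm hxz hsx.symm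
      htz hts hsz.symm a1 hf a3 h3 a5
  have hw : χ t s x = -χ t x s := sgn_sw23 hs hts hsx htx
  linarith

/-- Five-point lemma: `t` cannot have a 3-cycle `x,y,z` all of whose elements
precede some element `s`. -/
private lemma no_cycle_pred (hs : SignFn χ) (hint : Interiority χ)
    (htr : Transitivity χ) {t s x y z : X}
    (hts : t ≠ s) (htx : t ≠ x) (hty : t ≠ y) (htz : t ≠ z)
    (hsx : s ≠ x) (hsy : s ≠ y) (hsz : s ≠ z)
    (hxy : x ≠ y) (hxz : x ≠ z) (hyz : y ≠ z)
    (h1 : χ t x y = 1) (h2 : χ t y z = 1) (h3 : χ t z x = 1)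
    (h4 : χ t x s = 1) (h5 : χ t y s = 1) (h6 : χ t z s = 1) : False := by
  -- interiority forces χ x y z = 1
  have hxtz : χ x t z = 1 := by
    have a := sgn_sw12 hs htx.symm htz hxz
    have b := sgn_sw23 hs htx hxz htz
    linarith
  have hxyt : χ x y t = 1 := by
    have := sgn_cyc2 hs hxy hty.symm htx.symm; linarith
  have hf : χ x y z = 1 := hint t x y z htx hty htz hxy hxz hyz h2 hxtz hxyt
  have hfy : χ y z x = 1 := by
    have := sgn_cyc hs hxy hyz hxz; linarith
  have hfz : χ z x y = 1 := by
    have := sgn_cyc2 hs hxy hyz hxz; linarith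
  -- case analysis on the three s-based signs
  rcases sgn_pm hs hsx hxy hsy with e1 | e1 <;>
  rcases sgn_pm hs hsy hyz hsz with e2 | e2 <;>
  rcases sgn_pm hs hsz hxz.symm hsx with e3 | e3
  -- (1,1,1): transitivity with (s,t,x,y,z) := (t,s,x,y,z)
  · have b1 : χ s t x = 1 := by
      have := sgn_cyc2 hs htx hsx.symm hts; linarith
    have b2 : χ s t y = 1 := by
      have := sgn_cyc2 hs hty hsy.symm hts; linarith
    have b3 : χ s t z = 1 := by
      have := sgn_cyc2 hs htz hsz.symm hts; linarith
    have b4 : χ x y s = 1 := by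
      have := sgn_cyc2 hs hxy hsy.symm hsx.symm; linarith
    have b5 : χ y z s = 1 := by
      have := sgn_cyc2 hs hyz hsz.symm hsy.symm; linarith
    have conc : χ x z s = 1 :=
      htr t s x y z hts htx hty htz hsx hsy hsz hxy hxz hyz b1 b2 b3 b4 b5
    have c1 : χ x z s = χ s x z := by
      have := sgn_cyc2 hs hxz hsz.symm hsx.symm; linarith
    have c2 : χ s x z = -χ s z x := sgn_sw23 hs hsx hxz hsz
    linarith
  -- (1,1,-1): pair (x,y,z)
  · exact pair_case hs htr hts htx hty htz hsx hsy hsz hxy hxz hyz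
      h1 h3 h4 hf e1 e3
  -- (1,-1,1): pair (z,x,y)
  · exact pair_case hs htr hts htz htx hty hsz hsx hsy hxz.symm hyz.symm hxy
      h3 h2 h6 hfz e3 e2
  -- (1,-1,-1): pair (x,y,z)
  · exact pair_case hs htr hts htx hty htz hsx hsy hsz hxy hxz hyz
      h1 h3 h4 hf e1 e3
  -- (-1,1,1): pair (y,z,x)
  · exact pair_case hs htr hts hty htz htx hsy hsz hsx hyz hxy.symm hxz.symm
      h2 h1 h5 hfy e2 e1
  -- (-1,1,-1): pair (y,z,x)
  · exact pair_case hs htr hts hty htz htx hsy hsz hsx hyz hxy.symm hxz.symm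
      h2 h1 h5 hfy e2 e1
  -- (-1,-1,1): pair (z,x,y)
  · exact pair_case hs htr hts htz htx hty hsz hsx hsy hxz.symm hyz.symm hxy
      h3 h2 h6 hfz e3 e2
  -- (-1,-1,-1): interiority with (t,x,y,z) := (s,x,z,y)
  · have c1 : χ s z y = 1 := by
      have := sgn_sw23 hs hsy hyz hsz; linarith
    have c2 : χ x s y = 1 := by
      have := sgn_sw12 hs hsx hxy hsy; linarith
    have c3 : χ x z s = 1 := by
      have a := sgn_cyc2 hs hxz hsz.symm hsx.symm
      have b := sgn_sw23 hs hsx hxz hsz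
      linarith
    have conc : χ x z y = 1 :=
      hint s x z y hsx hsz hsy hxz hxy hyz.symm c1 c2 c3
    have := sgn_sw23 hs hxy hyz hxz
    linarith

/-- A finite tournament (based at `t`) without 3-cycles has a minimum. -/
private lemma exists_min (hs : SignFn χ) (t : X)
    (hnc : ¬ ∃ a b c : X, a ≠ t ∧ b ≠ t ∧ c ≠ t ∧ a ≠ b ∧ b ≠ c ∧ a ≠ c ∧
        χ t a b = 1 ∧ χ t b c = 1 ∧ χ t c a = 1)
    (s : Finset X) (hst : ∀ u ∈ s, u ≠ t) (hne : s.Nonempty) :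
    ∃ m ∈ s, ∀ u ∈ s, u ≠ m → χ t m u = 1 := by
  classical
  induction s using Finset.induction_on with
  | empty => exact absurd hne (by simp)
  | @insert a s ha ih =>
    have hat : a ≠ t := hst a (Finset.mem_insert_self a s)
    by_cases hse : s.Nonempty
    · obtain ⟨m, hms, hmin⟩ := ih (fun u hu => hst u (Finset.mem_insert_of_mem hu)) hse
      have hmt : m ≠ t := hst m (Finset.mem_insert_of_mem hms)
      have ham : a ≠ m := fun h => ha (h ▸ hms)
      rcases sgn_pm hs hmt.symm ham.symm hat.symm with hma | hma
      · -- m still the minimum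
        refine ⟨m, Finset.mem_insert_of_mem hms, fun u hu hum => ?_⟩
        rcases Finset.mem_insert.mp hu with rfl | hu'
        · exact hma
        · exact hmin u hu' hum
      · -- χ t m a = -1, so χ t a m = 1 : a becomes the minimum
        have ham1 : χ t a m = 1 := by
          have := sgn_sw23 hs hmt.symm ham.symm hat.symm; linarith
        refine ⟨a, Finset.mem_insert_self a s, fun u hu hua => ?_⟩
        rcases Finset.mem_insert.mp hu with rfl | hu'
        · exact absurd rfl hua
        · have hut : u ≠ t := hst u (Finset.mem_insert_of_mem hu')
          have hau : a ≠ u := fun h => ha (h ▸ hu')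
          by_cases hum : u = m
          · exact hum ▸ ham1
          · have hmu : χ t m u = 1 := hmin u hu' hum
            rcases sgn_pm hs hat.symm hau hut.symm with hgood | hbad
            · exact hgood
            · exfalso
              have hua1 : χ t u a = 1 := by
                have := sgn_sw23 hs hat.symm hau hut.symm; linarith
              exact hnc ⟨a, m, u, hat, hmt, hut, ham, fun h => hum h.symm,
                hau, ham1, hmu, hua1⟩
    · obtain rfl : s = ∅ := Finset.not_nonempty_iff_eq_empty.mp hse
      refine ⟨a, Finset.mem_insert_self a ∅, fun u hu hua => ?_⟩
      simp only [Finset.mem_insert, Finset.notMem_empty, or_false] at hu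
      exact absurd hu hua

end Aux

/-- Carathéodory-type lemma. An element `t` of a chirotope on a
finite set `X` is not extreme iff there are distinct `a, b, c ∈ X \ {t}` with
`χ t a b = χ t b c = χ t c a = 1`. -/
theorem not_isExtreme_iff_exists_triangle
    {X : Type*} [Fintype X] (χ : X → X → X → ℤ) (hχ : Chirotope χ)
    (hcard : 2 ≤ Fintype.card X) (t : X) :
    ¬ ExtremeIn χ t ↔
      ∃ a b c : X, a ≠ t ∧ b ≠ t ∧ c ≠ t ∧ a ≠ b ∧ b ≠ c ∧ a ≠ c ∧
        χ t a b = 1 ∧ χ t b c = 1 ∧ χ t c a = 1 := by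
  classical
  obtain ⟨hs, hint, htr⟩ := hχ
  constructor
  · -- ¬ extreme → triangle ; contrapositive
    intro hne
    by_contra hnc
    obtain ⟨y0, hy0⟩ : ∃ y0 : X, y0 ≠ t := Fintype.exists_ne_of_one_lt_card (by omega) t
    set S : Finset X := Finset.univ.filter (· ≠ t) with hS
    have hSne : S.Nonempty := ⟨y0, by simp [hS, hy0]⟩
    obtain ⟨m, hmS, hmin⟩ := exists_min hs t hnc S (by simp [hS]) hSne
    have hmt : m ≠ t := by simpa [hS] using hmS
    exact hne ⟨m, hmt, 1, fun z hzt hzm => hmin z (by simp [hS, hzt]) hzm⟩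
  · -- triangle → ¬ extreme
    rintro ⟨a, b, c, hat, hbt, hct, hab, hbc, hac, g1, g2, g3⟩ ⟨s, hst, cst, hconst⟩
    have gac : χ t a c = -1 := by
      have := sgn_sw23 hs hat.symm hac hct.symm
      linarith
    by_cases hsa : s = a
    · subst hsa
      have e1 : χ t s b = cst := hconst b hbt hab.symm
      have e2 : χ t s c = cst := hconst c hct hac.symm
      linarith [g1, gac, e1, e2]
    · by_cases hsb : s = b
      · subst hsb
        have e1 : χ t s c = cst := hconst c hct hbc.symm
        have e2 : χ t s a = cst := hconst a hat hab
        have gba : χ t s a = -1 := by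
          have := sgn_sw23 hs hat.symm hab hbt.symm; linarith
        linarith [g2]
      · by_cases hsc : s = c
        · subst hsc
          have e1 : χ t s a = cst := hconst a hat hac
          have e2 : χ t s b = cst := hconst b hbt hbc
          have gcb : χ t s b = -1 := by
            have := sgn_sw23 hs hbt.symm hbc hct.symm; linarith
          linarith [g3]
        · have hsa' : s ≠ a := hsa
          have hsb' : s ≠ b := hsb
          have hsc' : s ≠ c := hsc
          have e1 : χ t s a = cst := hconst a hat (fun h => hsa h.symm)
          have e2 : χ t s b = cst := hconst b hbt (fun h => hsb h.symm)
          have e3 : χ t s c = cst := hconst c hct (fun h => hsc h.symm)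
          rcases sgn_pm hs hst.symm hsa' hat.symm with hpos | hneg
          · -- cst = 1 : transitivity gives χ t a c = 1, contradiction
            have b1 : χ t s a = 1 := hpos
            have b2 : χ t s b = 1 := by linarith
            have b3 : χ t s c = 1 := by linarith
            have c1 : χ a b t = 1 := by
              have := sgn_cyc2 hs hab hbt hat; linarith
            have c2 : χ b c t = 1 := by
              have := sgn_cyc2 hs hbc hct hbt; linarith
            have conc : χ a c t = 1 :=
              htr s t a b c hst hsa' hsb' hsc' hat.symm hbt.symm hct.symm
                hab hac hbc b1 b2 b3 c1 c2
            have := sgn_cyc2 hs hac hct hat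
            linarith
          · -- cst = -1 : everything precedes s, apply the five-point lemma
            have k4 : χ t a s = 1 := by
              have := sgn_sw23 hs hst.symm hsa' hat.symm; linarith
            have k5 : χ t b s = 1 := by
              have := sgn_sw23 hs hst.symm hsb' hbt.symm; linarith
            have k6 : χ t c s = 1 := by
              have := sgn_sw23 hs hst.symm hsc' hct.symm; linarith
            exact no_cycle_pred hs hint htr hst.symm hat.symm hbt.symm hct.symm
              hsa' hsb' hsc' hab hac hbc g1 g2 g3 k4 k5 k6
end

section
/- Let χ be a chirotope on a finite set X and let a ∈ X be an extreme element of χ. Then the relation p <ₐ q defined by χ(a,p,q)=1 is a strict total order on X \ {a}. -/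
/-! Let `b` witness that `a` is extreme, with `χ a b · = c`. Trichotomy and irreflexivity are the
sign axioms; transitivity amounts to excluding a cycle `χ a p q = χ a q r = χ a r p = 1`. Such a
cycle cannot pass through `b`, which lies on the same side of every other point. If `c = 1`, the
transitivity axiom with `s = b`, `t = a` closes the cycle. If `c = -1`, the transitivity axiom with
`s = a`, `t = b` makes `χ · · b` a transitive tournament on `{p, q, r}`; for its source `p`,
interiority puts `a` inside the triangle, `χ p q r = 1`, and transitivity with `s = q`, `t = p`
then forces `χ a b p = 1`. -/

section

variable {X : Type*} {χ : X → X → X → ℤ}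

namespace SignFn

variable {x y z : X}

theorem eq_one_or_eq_neg_one (hχ : SignFn χ) (hxy : x ≠ y) (hyz : y ≠ z) (hxz : x ≠ z) :
    χ x y z = 1 ∨ χ x y z = -1 :=
  (hχ x y z hxy hyz hxz).1

theorem rotate (hχ : SignFn χ) (hxy : x ≠ y) (hyz : y ≠ z) (hxz : x ≠ z) :
    χ x y z = χ y z x :=
  (hχ x y z hxy hyz hxz).2.1

theorem swap_left (hχ : SignFn χ) (hxy : x ≠ y) (hyz : y ≠ z) (hxz : x ≠ z) :
    χ x y z = -χ y x z :=
  (hχ x y z hxy hyz hxz).2.2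

theorem swap_right (hχ : SignFn χ) (hxy : x ≠ y) (hyz : y ≠ z) (hxz : x ≠ z) :
    χ x y z = -χ x z y := by
  rw [hχ.rotate hxy hyz hxz, hχ.swap_left hyz hxz.symm hxy.symm,
    ← hχ.rotate hxz hyz.symm hxy]

theorem swap_right_eq_one_iff (hχ : SignFn χ) (hxy : x ≠ y) (hyz : y ≠ z) (hxz : x ≠ z) :
    χ x z y = 1 ↔ χ x y z = -1 := by
  rw [hχ.swap_right hxy hyz hxz]
  omega

end SignFn

def IsCycleAround (χ : X → X → X → ℤ) (a p q r : X) : Prop :=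
  χ a p q = 1 ∧ χ a q r = 1 ∧ χ a r p = 1

variable {a b p q r : X}

theorem IsCycleAround.rotate (h : IsCycleAround χ a p q r) : IsCycleAround χ a q r p :=
  ⟨h.2.1, h.2.2, h.1⟩

theorem IsCycleAround.not_const (h : IsCycleAround χ a p q r) (hχ : SignFn χ)
    (hpa : p ≠ a) (hqa : q ≠ a) (hra : r ≠ a) (hpq : p ≠ q) (hrp : r ≠ p) :
    ¬∃ c, ∀ z, z ≠ a → z ≠ p → χ a p z = c := by
  rintro ⟨c, hc⟩
  have hapr : χ a p r = -1 := (hχ.swap_right_eq_one_iff hpa.symm hrp.symm hra.symm).mp h.2.2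
  linarith [h.1, hc q hqa hpq.symm, hc r hra hrp]

theorem not_isCycleAround_of_eq_one (hχ : SignFn χ) (htr : Transitivity χ)
    (hbp : χ a b p = 1) (hbq : χ a b q = 1) (hbr : χ a b r = 1)
    (hab : a ≠ b) (hpa : p ≠ a) (hqa : q ≠ a) (hra : r ≠ a) (hpb : p ≠ b) (hqb : q ≠ b)
    (hrb : r ≠ b) (hpq : p ≠ q) (hqr : q ≠ r) (hrp : r ≠ p) :
    ¬IsCycleAround χ a p q r := by
  rintro ⟨hapq, haqr, harp⟩
  have hpra : χ p r a = 1 :=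
    htr b a p q r hab.symm hpb.symm hqb.symm hrb.symm hpa.symm hqa.symm hra.symm hpq hrp.symm
      hqr hbp hbq hbr (by rwa [← hχ.rotate hpa.symm hpq hqa.symm])
      (by rwa [← hχ.rotate hqa.symm hqr hra.symm])
  rw [← hχ.rotate hpa.symm hrp.symm hra.symm] at hpra
  have := (hχ.swap_right_eq_one_iff hpa.symm hrp.symm hra.symm).mp harp
  omega

theorem not_isCycleAround_of_source (hχ : Chirotope χ) (hbp : χ a b p = -1)
    (hpqb : χ p q b = 1) (hprb : χ p r b = 1)
    (hab : a ≠ b) (hpa : p ≠ a) (hqa : q ≠ a) (hra : r ≠ a) (hpb : p ≠ b) (hqb : q ≠ b)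
    (hrb : r ≠ b) (hpq : p ≠ q) (hqr : q ≠ r) (hrp : r ≠ p) :
    ¬IsCycleAround χ a p q r := by
  obtain ⟨hsign, hint, htr⟩ := hχ
  rintro ⟨hapq, haqr, harp⟩
  have hpqa : χ p q a = 1 := by rwa [← hsign.rotate hpa.symm hpq hqa.symm]
  have hpar : χ p a r = 1 := by
    rwa [← hsign.rotate hrp hpa hra, ← hsign.rotate hra.symm hrp hpa.symm]
  have hpqr : χ p q r = 1 :=
    hint a p q r hpa.symm hqa.symm hra.symm hpq hrp.symm hqr haqr hpar hpqa
  have hrbp : χ r b p = 1 := by rwa [← hsign.rotate hrp.symm hrb hpb]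
  have := htr q p a r b hpq.symm hqa hqr hqb hpa hrp.symm hpb hra.symm hab hrb hpqa hpqr hpqb
    harp hrbp
  linarith

theorem not_isCycleAround_of_eq_neg_one (hχ : Chirotope χ)
    (hbp : χ a b p = -1) (hbq : χ a b q = -1) (hbr : χ a b r = -1)
    (hab : a ≠ b) (hpa : p ≠ a) (hqa : q ≠ a) (hra : r ≠ a) (hpb : p ≠ b) (hqb : q ≠ b)
    (hrb : r ≠ b) (hpq : p ≠ q) (hqr : q ≠ r) (hrp : r ≠ p) :
    ¬IsCycleAround χ a p q r := by
  intro hcyc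
  have htotal : ∀ {x y : X}, x ≠ y → x ≠ b → y ≠ b → χ x y b = 1 ∨ χ y x b = 1 := by
    intro x y hxy hxb hyb
    rcases hχ.1.eq_one_or_eq_neg_one hxy hyb hxb with h | h
    · exact .inl h
    · right; linarith [hχ.1.swap_left hxy hyb hxb]
  have hba : ∀ {x : X}, x ≠ a → x ≠ b → χ a b x = -1 → χ b a x = 1 := by
    intro x hxa hxb h
    linarith [hχ.1.swap_left hab hxb.symm hxa.symm]
  have htrans : ∀ {x y z : X}, x ≠ a → y ≠ a → z ≠ a → x ≠ b → y ≠ b → z ≠ b →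
      x ≠ y → y ≠ z → x ≠ z → χ a b x = -1 → χ a b y = -1 → χ a b z = -1 →
      χ x y b = 1 → χ y z b = 1 → χ x z b = 1 := by
    intro x y z hxa hya hza hxb hyb hzb hxy hyz hxz hbx hby hbz
    exact hχ.2.2 a b x y z hab hxa.symm hya.symm hza.symm hxb.symm hyb.symm hzb.symm hxy hxz
      hyz (hba hxa hxb hbx) (hba hya hyb hby) (hba hza hzb hbz)
  rcases htotal hpq hpb hqb with hpqb | hqpb
  · rcases htotal hrp.symm hpb hrb with hprb | hrpb
    · exact not_isCycleAround_of_source hχ hbp hpqb hprb hab hpa hqa hra hpb hqb hrb hpq hqr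
        hrp hcyc
    · exact not_isCycleAround_of_source hχ hbr hrpb
        (htrans hra hpa hqa hrb hpb hqb hrp hpq hqr.symm hbr hbp hbq hrpb hpqb)
        hab hra hpa hqa hrb hpb hqb hrp hpq hqr hcyc.rotate.rotate
  · rcases htotal hqr hqb hrb with hqrb | hrqb
    · exact not_isCycleAround_of_source hχ hbq hqrb hqpb hab hqa hra hpa hqb hrb hpb hqr hrp
        hpq hcyc.rotate
    · exact not_isCycleAround_of_source hχ hbr
        (htrans hra hqa hpa hrb hqb hpb hqr.symm hpq.symm hrp hbr hbq hbp hrqb hqpb) hrqb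
        hab hra hpa hqa hrb hpb hqb hrp hpq hqr hcyc.rotate.rotate

theorem Chirotope.not_isCycleAround_of_extremeIn (hχ : Chirotope χ) (ha : ExtremeIn χ a)
    (hpa : p ≠ a) (hqa : q ≠ a) (hra : r ≠ a) (hpq : p ≠ q) (hqr : q ≠ r) (hrp : r ≠ p) :
    ¬IsCycleAround χ a p q r := by
  obtain ⟨b, hba, c, hc⟩ := ha
  intro hcyc
  obtain rfl | hpb := eq_or_ne p b
  · exact hcyc.not_const hχ.1 hpa hqa hra hpq hrp ⟨c, hc⟩
  obtain rfl | hqb := eq_or_ne q b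
  · exact hcyc.rotate.not_const hχ.1 hqa hra hpa hqr hpq ⟨c, hc⟩
  obtain rfl | hrb := eq_or_ne r b
  · exact hcyc.rotate.rotate.not_const hχ.1 hra hpa hqa hrp hqr ⟨c, hc⟩
  rcases hχ.1.eq_one_or_eq_neg_one hba.symm hpb.symm hpa.symm with hc₁ | hc₁ <;>
    rw [hc p hpa hpb] at hc₁ <;> subst hc₁
  · exact not_isCycleAround_of_eq_one hχ.1 hχ.2.2 (hc p hpa hpb) (hc q hqa hqb) (hc r hra hrb)
      hba.symm hpa hqa hra hpb hqb hrb hpq hqr hrp hcyc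
  · exact not_isCycleAround_of_eq_neg_one hχ (hc p hpa hpb) (hc q hqa hqb) (hc r hra hrb)
      hba.symm hpa hqa hra hpb hqb hrb hpq hqr hrp hcyc

theorem Chirotope.sign_trans_of_extremeIn (hχ : Chirotope χ) (ha : ExtremeIn χ a)
    (hpa : p ≠ a) (hqa : q ≠ a) (hra : r ≠ a) (hpq : p ≠ q) (hqr : q ≠ r) (hrp : r ≠ p)
    (hapq : χ a p q = 1) (haqr : χ a q r = 1) : χ a p r = 1 := by
  rcases hχ.1.eq_one_or_eq_neg_one hpa.symm hrp.symm hra.symm with h | h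
  · exact h
  · exact absurd ⟨hapq, haqr, (hχ.1.swap_right_eq_one_iff hpa.symm hrp.symm hra.symm).mpr h⟩
      (hχ.not_isCycleAround_of_extremeIn ha hpa hqa hra hpq hqr hrp)

end

theorem extreme_gives_strictTotalOrder_general
    {X : Type*} (χ : X → X → X → ℤ) (hχ : Chirotope χ)
    (a : X) (ha : ExtremeIn χ a) :
    IsStrictTotalOrder {p : X // p ≠ a}
      (fun p q => p.1 ≠ q.1 ∧ χ a p.1 q.1 = 1) := by
  refine { irrefl := fun p hp => hp.1 rfl, trichotomous := ?_, trans := ?_ }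
  · intro p q hpq hqp
    by_contra hne
    have hne : p.1 ≠ q.1 := Subtype.coe_ne_coe.mpr hne
    rcases hχ.1.eq_one_or_eq_neg_one p.2.symm hne q.2.symm with h | h
    · exact hpq ⟨hne, h⟩
    · exact hqp ⟨hne.symm, (hχ.1.swap_right_eq_one_iff p.2.symm hne q.2.symm).mpr h⟩
  · rintro ⟨p, hpa⟩ ⟨q, hqa⟩ ⟨r, hra⟩ ⟨hpq, hapq⟩ ⟨hqr, haqr⟩
    dsimp only at hpq hapq hqr haqr ⊢
    have hrp : r ≠ p := by
      rintro rfl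
      have := (hχ.1.swap_right_eq_one_iff hra.symm hpq hqa.symm).mp haqr
      omega
    exact ⟨hrp.symm, hχ.sign_trans_of_extremeIn ha hpa hqa hra hpq hqr hrp hapq haqr⟩

/-- If `a` is an extreme element of a chirotope `χ` on a finite
set `X`, then the relation `p <ₐ q ⟺ χ a p q = 1` is a strict total order on
`X \ {a}`. -/
theorem extreme_gives_strictTotalOrder
    {X : Type*} [Fintype X] (χ : X → X → X → ℤ) (hχ : Chirotope χ)
    (a : X) (ha : ExtremeIn χ a) :
    IsStrictTotalOrder {p : X // p ≠ a}
      (fun p q => p.1 ≠ q.1 ∧ χ a p.1 q.1 = 1) :=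
  extreme_gives_strictTotalOrder_general χ hχ a ha
end

section
/- Let X and Y be disjoint finite sets with |X|,|Y| ≥ 2, take x* ∉ X and y* ∉ Y, and let χ and ξ be chirotopes on X ∪ {x*} and Y ∪ {y*} respectively. If x* is not extreme in χ, then the bowtie product χ ⋈ ξ (with respect to x*, y*) is not a chirotope (it violates the transitivity axiom). -/
/-- A sign function on the (finite) ground set `S`: defined on triples of
pairwise distinct elements of `S`, with values in `{-1, +1}`, alternating
under permutations of the arguments. -/
def SignFnOn {T : Type*} (χ : T → T → T → ℤ) (S : Finset T) : Prop :=
  ∀ x ∈ S, ∀ y ∈ S, ∀ z ∈ S, x ≠ y → y ≠ z → x ≠ z →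
    (χ x y z = 1 ∨ χ x y z = -1) ∧ χ x y z = χ y z x ∧ χ x y z = -χ y x z

/-- The interiority axiom on the ground set `S`. -/
def InteriorityOn {T : Type*} (χ : T → T → T → ℤ) (S : Finset T) : Prop :=
  ∀ t ∈ S, ∀ x ∈ S, ∀ y ∈ S, ∀ z ∈ S,
    t ≠ x → t ≠ y → t ≠ z → x ≠ y → x ≠ z → y ≠ z →
    χ t y z = 1 → χ x t z = 1 → χ x y t = 1 → χ x y z = 1

/-- The transitivity axiom on the ground set `S`. -/
def TransitivityOn {T : Type*} (χ : T → T → T → ℤ) (S : Finset T) : Prop :=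
  ∀ s ∈ S, ∀ t ∈ S, ∀ x ∈ S, ∀ y ∈ S, ∀ z ∈ S,
    s ≠ t → s ≠ x → s ≠ y → s ≠ z → t ≠ x → t ≠ y → t ≠ z →
    x ≠ y → x ≠ z → y ≠ z →
    χ t s x = 1 → χ t s y = 1 → χ t s z = 1 → χ x y t = 1 → χ y z t = 1 →
    χ x z t = 1

/-- A chirotope on the ground set `S`. -/
def ChirotopeOn {T : Type*} (χ : T → T → T → ℤ) (S : Finset T) : Prop :=
  SignFnOn χ S ∧ InteriorityOn χ S ∧ TransitivityOn χ S

/-- `x` is extreme in the chirotope `χ` on ground set `S`: `x ∈ S` and there is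
`y ∈ S \ {x}` such that `χ x y z` takes the same value for all
`z ∈ S \ {x, y}`. -/
def ExtremeInOn {T : Type*} (χ : T → T → T → ℤ) (S : Finset T) (x : T) : Prop :=
  x ∈ S ∧ ∃ y ∈ S, y ≠ x ∧ ∃ c : ℤ, ∀ z ∈ S, z ≠ x → z ≠ y → χ x y z = c

/-- Replace every element outside `S` by the proxy `p`. -/
def projTo {T : Type*} [DecidableEq T] (S : Finset T) (p : T) (u : T) : T :=
  if u ∈ S then u else p

/-- The bowtie `χ ⋈_{xs, ys} ξ` of a sign function `χ` on `X ∪ {xs}` and a sign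
function `ξ` on `Y ∪ {ys}`: on a triple of elements of `X ∪ Y`, if the majority
of the elements lies in `X` use `χ`, replacing the (possible) element of `Y` by
the proxy `xs`; otherwise use `ξ`, replacing the (possible) element of `X` by
the proxy `ys`.  This agrees with the definition on the four distinguished
kinds of triples, extended by the symmetry condition. -/
def bowtie {T : Type*} [DecidableEq T] (χ : T → T → T → ℤ) (X : Finset T)
    (xs : T) (ξ : T → T → T → ℤ) (Y : Finset T) (ys : T) : T → T → T → ℤ :=
  fun u v w =>
    if 2 ≤ ((if u ∈ X then 1 else 0) + (if v ∈ X then 1 else 0) +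
        (if w ∈ X then 1 else 0) : ℕ) then
      χ (projTo X xs u) (projTo X xs v) (projTo X xs w)
    else
      ξ (projTo Y ys u) (projTo Y ys v) (projTo Y ys w)

section AuxSign

variable {T : Type*} {χ : T → T → T → ℤ} {S : Finset T}

lemma sgn_pm_s4 (h : SignFnOn χ S) {x y z : T} (hx : x ∈ S) (hy : y ∈ S) (hz : z ∈ S)
    (h1 : x ≠ y) (h2 : y ≠ z) (h3 : x ≠ z) : χ x y z = 1 ∨ χ x y z = -1 :=
  (h x hx y hy z hz h1 h2 h3).1

lemma sgn_cyc_s4 (h : SignFnOn χ S) {x y z : T} (hx : x ∈ S) (hy : y ∈ S) (hz : z ∈ S)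
    (h1 : x ≠ y) (h2 : y ≠ z) (h3 : x ≠ z) : χ x y z = χ y z x :=
  (h x hx y hy z hz h1 h2 h3).2.1

lemma sgn_swap (h : SignFnOn χ S) {x y z : T} (hx : x ∈ S) (hy : y ∈ S) (hz : z ∈ S)
    (h1 : x ≠ y) (h2 : y ≠ z) (h3 : x ≠ z) : χ x y z = -χ y x z :=
  (h x hx y hy z hz h1 h2 h3).2.2

/-- Antisymmetry in the last two arguments. -/
lemma sgn_anti (h : SignFnOn χ S) {x y z : T} (hx : x ∈ S) (hy : y ∈ S) (hz : z ∈ S)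
    (h1 : x ≠ y) (h2 : y ≠ z) (h3 : x ≠ z) : χ x y z = -χ x z y := by
  have e1 : χ x z y = χ z y x := sgn_cyc_s4 h hx hz hy h3 h2.symm h1
  have e2 : χ z y x = -χ y z x := sgn_swap h hz hy hx h2.symm h1.symm h3.symm
  have e3 : χ x y z = χ y z x := sgn_cyc_s4 h hx hy hz h1 h2 h3
  omega

end AuxSign

/-- If `x*` is not extreme in `χ`, then the bowtie
`χ ⋈_{x*,y*} ξ` violates the transitivity axiom, hence is not a chirotope
on `X ∪ Y`. -/
theorem bowtie_not_chirotope_of_not_extreme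
    {T : Type*} [DecidableEq T] (χ ξ : T → T → T → ℤ)
    (X Y : Finset T) (xs ys : T)
    (hdisj : Disjoint X Y) (hxs : xs ∉ X ∪ Y) (hys : ys ∉ X ∪ Y) (hxy : xs ≠ ys)
    (hXcard : 2 ≤ X.card) (hYcard : 2 ≤ Y.card)
    (hχ : ChirotopeOn χ (insert xs X)) (hξ : ChirotopeOn ξ (insert ys Y))
    (hx : ¬ ExtremeInOn χ (insert xs X) xs) :
    ¬ TransitivityOn (bowtie χ X xs ξ Y ys) (X ∪ Y) ∧
    ¬ ChirotopeOn (bowtie χ X xs ξ Y ys) (X ∪ Y) := by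
  rw [Finset.mem_union, not_or] at hxs hys
  obtain ⟨hχs, hχi, hχt⟩ := hχ
  obtain ⟨hξs, hξi, hξt⟩ := hξ
  have hxsX : xs ∉ X := hxs.1
  have hysY : ys ∉ Y := hys.2
  have hXY : ∀ u ∈ X, u ∉ Y := fun u hu => Finset.disjoint_left.mp hdisj hu
  have hxsne : ∀ u ∈ X, xs ≠ u := fun u hu h => hxsX (h ▸ hu)
  have hysne : ∀ u ∈ Y, ys ≠ u := fun u hu h => hysY (h ▸ hu)
  have hmemX : ∀ u ∈ X, u ∈ insert xs X := fun u hu => Finset.mem_insert_of_mem hu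
  have hmemY : ∀ u ∈ Y, u ∈ insert ys Y := fun u hu => Finset.mem_insert_of_mem hu
  have hxsmem : xs ∈ insert xs X := Finset.mem_insert_self _ _
  have hysmem : ys ∈ insert ys Y := Finset.mem_insert_self _ _
  -- antisymmetry of the tournament `R a b := χ xs a b = 1` on `X`
  have hanti : ∀ a ∈ X, ∀ b ∈ X, a ≠ b → χ xs a b = -χ xs b a := fun a ha b hb hab =>
    sgn_anti hχs hxsmem (hmemX a ha) (hmemX b hb) (hxsne a ha) hab (hxsne b hb)
  have hpm : ∀ a ∈ X, ∀ b ∈ X, a ≠ b → (χ xs a b = 1 ∨ χ xs a b = -1) := fun a ha b hb hab =>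
    sgn_pm_s4 hχs hxsmem (hmemX a ha) (hmemX b hb) (hxsne a ha) hab (hxsne b hb)
  -- Step 1: find a 3-cycle in the tournament
  obtain ⟨x, hxX, y, hyX, z, hzX, hxy', hyz', hxz', Rxy, Ryz, Rzx⟩ :
      ∃ x ∈ X, ∃ y ∈ X, ∃ z ∈ X, x ≠ y ∧ y ≠ z ∧ x ≠ z ∧
        χ xs x y = 1 ∧ χ xs y z = 1 ∧ χ xs z x = 1 := by
    by_contra hcon
    push_neg at hcon
    -- transitivity of the tournament
    have htrans : ∀ a ∈ X, ∀ b ∈ X, ∀ c ∈ X, a ≠ b → b ≠ c → a ≠ c →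
        χ xs a b = 1 → χ xs b c = 1 → χ xs a c = 1 := by
      intro a ha b hb c hc hab hbc hac h1 h2
      have h3 := hcon a ha b hb c hc hab hbc hac h1 h2
      rcases hpm c hc a ha (Ne.symm hac) with h | h
      · exact absurd h h3
      · have := hanti a ha c hc hac
        omega
    have hne : X.Nonempty := Finset.card_pos.mp (by omega)
    obtain ⟨a, haX, ha⟩ := X.exists_min_image
      (fun a => (X.filter (fun w => w ≠ a ∧ χ xs w a = 1)).card) hne
    have hmin : ∀ w ∈ X, w ≠ a → χ xs w a ≠ 1 := by
      intro v hvX hva hRva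
      have hsub : X.filter (fun w => w ≠ v ∧ χ xs w v = 1) ⊆
          (X.filter (fun w => w ≠ a ∧ χ xs w a = 1)).erase v := by
        intro w hw
        simp only [Finset.mem_filter] at hw
        obtain ⟨hwX, hwv, hRwv⟩ := hw
        have hwa : w ≠ a := by
          rintro rfl
          have := hanti w hwX v hvX (Ne.symm hwv).symm
          omega
        rw [Finset.mem_erase, Finset.mem_filter]
        exact ⟨hwv, hwX, hwa, htrans w hwX v hvX a haX hwv hva hwa hRwv hRva⟩
      have hvin : v ∈ X.filter (fun w => w ≠ a ∧ χ xs w a = 1) := by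
        rw [Finset.mem_filter]; exact ⟨hvX, hva, hRva⟩
      have hlt : (X.filter (fun w => w ≠ v ∧ χ xs w v = 1)).card <
          (X.filter (fun w => w ≠ a ∧ χ xs w a = 1)).card := by
        calc (X.filter (fun w => w ≠ v ∧ χ xs w v = 1)).card
            ≤ ((X.filter (fun w => w ≠ a ∧ χ xs w a = 1)).erase v).card :=
              Finset.card_le_card hsub
          _ < (X.filter (fun w => w ≠ a ∧ χ xs w a = 1)).card :=
              Finset.card_erase_lt_of_mem hvin
      exact absurd (ha v hvX) (by omega)
    -- `a` is a minimum, so `xs` is extreme: contradiction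
    apply hx
    refine ⟨hxsmem, a, hmemX a haX, (hxsne a haX).symm, 1, ?_⟩
    intro w hw hwxs hwa
    have hwX : w ∈ X := by
      rcases Finset.mem_insert.mp hw with h | h
      · exact absurd h hwxs
      · exact h
    rcases hpm w hwX a haX hwa with h | h
    · exact absurd h (hmin w hwX hwa)
    · have := hanti a haX w hwX (Ne.symm hwa)
      omega
  -- Step 2: pick `t s ∈ Y` with `ξ t s ys = 1`
  obtain ⟨t, htY, s, hsY, hts, hTS⟩ : ∃ t ∈ Y, ∃ s ∈ Y, t ≠ s ∧ ξ t s ys = 1 := by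
    obtain ⟨t, htY, s, hsY, hts⟩ := Finset.one_lt_card.mp hYcard
    rcases sgn_pm_s4 hξs (hmemY t htY) (hmemY s hsY) hysmem hts (hysne s hsY).symm
        (hysne t htY).symm with h | h
    · exact ⟨t, htY, s, hsY, hts, h⟩
    · refine ⟨s, hsY, t, htY, hts.symm, ?_⟩
      have := sgn_swap hξs (hmemY t htY) (hmemY s hsY) hysmem hts (hysne s hsY).symm
        (hysne t htY).symm
      omega
  -- computation lemmas for the bowtie
  have hb1 : ∀ u ∈ Y, ∀ v ∈ Y, ∀ w ∈ X, bowtie χ X xs ξ Y ys u v w = ξ u v ys := by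
    intro u hu v hv w hw
    have hu' : u ∉ X := fun h => hXY u h hu
    have hv' : v ∉ X := fun h => hXY v h hv
    have hw' : w ∉ Y := hXY w hw
    simp [bowtie, projTo, hu, hv, hw, hu', hv', hw']
  have hb2 : ∀ u ∈ X, ∀ v ∈ X, ∀ w ∈ Y, bowtie χ X xs ξ Y ys u v w = χ u v xs := by
    intro u hu v hv w hw
    have hw' : w ∉ X := fun h => hXY w h hw
    simp [bowtie, projTo, hu, hv, hw']
  -- relate `χ u v xs` to `χ xs u v`
  have hc : ∀ u ∈ X, ∀ v ∈ X, u ≠ v → χ u v xs = χ xs u v := fun u hu v hv huv =>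
    (sgn_cyc_s4 hχs hxsmem (hmemX u hu) (hmemX v hv) (hxsne u hu) huv (hxsne v hv)).symm
  -- Step 3: the violation
  have key : ¬ TransitivityOn (bowtie χ X xs ξ Y ys) (X ∪ Y) := by
    intro htr
    have msX : ∀ u ∈ X, u ∈ X ∪ Y := fun u hu => Finset.mem_union_left _ hu
    have msY : ∀ u ∈ Y, u ∈ X ∪ Y := fun u hu => Finset.mem_union_right _ hu
    have hsx : s ≠ x := fun h => hXY x hxX (h ▸ hsY)
    have hsy : s ≠ y := fun h => hXY y hyX (h ▸ hsY)
    have hsz : s ≠ z := fun h => hXY z hzX (h ▸ hsY)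
    have htx : t ≠ x := fun h => hXY x hxX (h ▸ htY)
    have hty : t ≠ y := fun h => hXY y hyX (h ▸ htY)
    have htz : t ≠ z := fun h => hXY z hzX (h ▸ htY)
    have h1 : bowtie χ X xs ξ Y ys t s x = 1 := by rw [hb1 t htY s hsY x hxX]; exact hTS
    have h2 : bowtie χ X xs ξ Y ys t s y = 1 := by rw [hb1 t htY s hsY y hyX]; exact hTS
    have h3 : bowtie χ X xs ξ Y ys t s z = 1 := by rw [hb1 t htY s hsY z hzX]; exact hTS
    have h4 : bowtie χ X xs ξ Y ys x y t = 1 := by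
      rw [hb2 x hxX y hyX t htY, hc x hxX y hyX hxy']; exact Rxy
    have h5 : bowtie χ X xs ξ Y ys y z t = 1 := by
      rw [hb2 y hyX z hzX t htY, hc y hyX z hzX hyz']; exact Ryz
    have h6 := htr s (msY s hsY) t (msY t htY) x (msX x hxX) y (msX y hyX) z (msX z hzX)
      hts.symm hsx hsy hsz htx hty htz hxy' hxz' hyz' h1 h2 h3 h4 h5
    rw [hb2 x hxX z hzX t htY, hc x hxX z hzX hxz'] at h6
    have := hanti x hxX z hzX hxz'
    omega
  exact ⟨key, fun h => key h.2.2⟩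
end

section
/- Let χ and ξ be chirotopes on disjoint sets X ∪ {x*} and Y ∪ {y*} with |X|,|Y| ≥ 2, and suppose x* and y* are extreme in χ and ξ respectively. Then the set of extreme elements of the bowtie χ ⋈_{x*,y*} ξ equals the union of the extreme elements of χ other than x* and the extreme elements of ξ other than y*. -/
section Helpers

open Finset

variable {T : Type*}

lemma sign_val {χ : T → T → T → ℤ} {S : Finset T} (h : SignFnOn χ S)
    {a b c : T} (ha : a ∈ S) (hb : b ∈ S) (hc : c ∈ S)
    (hab : a ≠ b) (hbc : b ≠ c) (hac : a ≠ c) :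
    χ a b c = 1 ∨ χ a b c = -1 := (h a ha b hb c hc hab hbc hac).1

lemma sign_cyc {χ : T → T → T → ℤ} {S : Finset T} (h : SignFnOn χ S)
    {a b c : T} (ha : a ∈ S) (hb : b ∈ S) (hc : c ∈ S)
    (hab : a ≠ b) (hbc : b ≠ c) (hac : a ≠ c) :
    χ a b c = χ b c a := (h a ha b hb c hc hab hbc hac).2.1

lemma sign_swap12 {χ : T → T → T → ℤ} {S : Finset T} (h : SignFnOn χ S)
    {a b c : T} (ha : a ∈ S) (hb : b ∈ S) (hc : c ∈ S)
    (hab : a ≠ b) (hbc : b ≠ c) (hac : a ≠ c) :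
    χ a b c = -χ b a c := (h a ha b hb c hc hab hbc hac).2.2

lemma sign_swap23 {χ : T → T → T → ℤ} {S : Finset T} (h : SignFnOn χ S)
    {a b c : T} (ha : a ∈ S) (hb : b ∈ S) (hc : c ∈ S)
    (hab : a ≠ b) (hbc : b ≠ c) (hac : a ≠ c) :
    χ a b c = -χ a c b := by
  have h1 := sign_cyc h ha hb hc hab hbc hac
  have h2 := sign_swap12 h hb hc ha hbc hac.symm hab.symm
  have h3 := sign_cyc h ha hc hb hac hbc.symm hab
  linarith

lemma exists_rel_max {α : Type*} (r : α → α → Prop) (s : Finset α) :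
    s.Nonempty →
    (∀ a ∈ s, ∀ b ∈ s, a ≠ b → r a b ∨ r b a) →
    (∀ a ∈ s, ∀ b ∈ s, ∀ c ∈ s, a ≠ b → b ≠ c → a ≠ c → r a b → r b c → r a c) →
    ∃ m ∈ s, ∀ b ∈ s, b ≠ m → r b m := by
  induction s using Finset.cons_induction with
  | empty => intro h; exact absurd h (by simp)
  | cons a s ha ih =>
    intro _ htot htrans
    rcases s.eq_empty_or_nonempty with rfl | hs
    · refine ⟨a, Finset.mem_cons_self a _, ?_⟩
      intro b hb hba
      rcases Finset.mem_cons.mp hb with rfl | h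
      · exact absurd rfl hba
      · simp at h
    · obtain ⟨m, hm, hmax⟩ := ih hs
        (fun x hx y hy => htot x (Finset.mem_cons_of_mem hx) y (Finset.mem_cons_of_mem hy))
        (fun x hx y hy z hz => htrans x (Finset.mem_cons_of_mem hx) y
          (Finset.mem_cons_of_mem hy) z (Finset.mem_cons_of_mem hz))
      have ham : a ≠ m := fun h => ha (h ▸ hm)
      rcases htot a (Finset.mem_cons_self a s) m (Finset.mem_cons_of_mem hm) ham with ham' | hma'
      · refine ⟨m, Finset.mem_cons_of_mem hm, ?_⟩
        intro b hb hbm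
        rcases Finset.mem_cons.mp hb with rfl | hbs
        · exact ham'
        · exact hmax b hbs hbm
      · refine ⟨a, Finset.mem_cons_self a s, ?_⟩
        intro b hb hba
        rcases Finset.mem_cons.mp hb with rfl | hbs
        · exact absurd rfl hba
        · by_cases hbm : b = m
          · exact hbm ▸ hma'
          · exact htrans b (Finset.mem_cons_of_mem hbs) m (Finset.mem_cons_of_mem hm) a
              (Finset.mem_cons_self a s) hbm (Ne.symm ham) hba (hmax b hbs hbm) hma'

/-- If `x` is extreme with witness `y` and constant `1`, there is a witness with
constant `-1`. -/
lemma opp_witness [DecidableEq T] {χ : T → T → T → ℤ} {S : Finset T}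
    (hχ : ChirotopeOn χ S) {x y z₀ : T} (hxS : x ∈ S) (hyS : y ∈ S) (hyx : y ≠ x)
    (hw : ∀ z ∈ S, z ≠ x → z ≠ y → χ x y z = 1)
    (hz₀ : z₀ ∈ S) (hz₀x : z₀ ≠ x) (hz₀y : z₀ ≠ y) :
    ∃ m ∈ S, m ≠ x ∧ m ≠ y ∧ ∀ z ∈ S, z ≠ x → z ≠ m → χ x m z = -1 := by
  obtain ⟨hsgn, hint, htr⟩ := hχ
  classical
  set B := S.filter (fun t => t ≠ x ∧ t ≠ y) with hB
  have hmemB : ∀ {t}, t ∈ B ↔ t ∈ S ∧ t ≠ x ∧ t ≠ y := by intro t; simp [hB]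
  obtain ⟨m, hmB, hmax⟩ := exists_rel_max (fun a b => χ a b x = 1) B
    ⟨z₀, hmemB.mpr ⟨hz₀, hz₀x, hz₀y⟩⟩
    (by
      intro a haB b hbB hab
      obtain ⟨haS, hax, hay⟩ := hmemB.mp haB
      obtain ⟨hbS, hbx, hby⟩ := hmemB.mp hbB
      have hsw := sign_swap12 hsgn haS hbS hxS hab hbx hax
      rcases sign_val hsgn haS hbS hxS hab hbx hax with h1 | h1
      · exact Or.inl h1
      · refine Or.inr ?_
        rw [h1] at hsw
        linarith)
    (by
      intro a haB b hbB c hcB hab hbc hac h1 h2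
      obtain ⟨haS, hax, hay⟩ := hmemB.mp haB
      obtain ⟨hbS, hbx, hby⟩ := hmemB.mp hbB
      obtain ⟨hcS, hcx, hcy⟩ := hmemB.mp hcB
      exact htr y hyS x hxS a haS b hbS c hcS hyx hay.symm hby.symm hcy.symm
        hax.symm hbx.symm hcx.symm hab hac hbc
        (hw a haS hax hay) (hw b hbS hbx hby) (hw c hcS hcx hcy) h1 h2)
  obtain ⟨hmS, hmx, hmy⟩ := hmemB.mp hmB
  refine ⟨m, hmS, hmx, hmy, ?_⟩
  intro w hwS hwx hwm
  by_cases hwy : w = y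
  · have h1 : χ x y m = 1 := hw m hmS hmx hmy
    have h2 := sign_swap23 hsgn hxS hmS hyS hmx.symm hmy hyx.symm
    rw [hwy, h2, h1]
  · have hwB : w ∈ B := hmemB.mpr ⟨hwS, hwx, hwy⟩
    have h1 : χ w m x = 1 := hmax w hwB hwm
    have h2 := sign_cyc hsgn hxS hmS hwS hmx.symm hwm.symm hwx.symm
    have h3 := sign_swap12 hsgn hmS hwS hxS hwm.symm hwx hmx
    rw [h2, h3, h1]

end Helpers
section Bowtie

open Finset

variable {T : Type*} [DecidableEq T]

lemma bow3X (χ ξ : T → T → T → ℤ) (X Y : Finset T) (xs ys : T) {u v w : T}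
    (hu : u ∈ X) (hv : v ∈ X) (hw : w ∈ X) :
    bowtie χ X xs ξ Y ys u v w = χ u v w := by
  simp [bowtie, projTo, hu, hv, hw]

lemma bow2XXY (χ ξ : T → T → T → ℤ) (X Y : Finset T) (xs ys : T) {u v w : T}
    (hu : u ∈ X) (hv : v ∈ X) (hw : w ∉ X) :
    bowtie χ X xs ξ Y ys u v w = χ u v xs := by
  simp [bowtie, projTo, hu, hv, hw]

lemma bow2XYX (χ ξ : T → T → T → ℤ) (X Y : Finset T) (xs ys : T) {u v w : T}
    (hu : u ∈ X) (hv : v ∉ X) (hw : w ∈ X) :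
    bowtie χ X xs ξ Y ys u v w = χ u xs w := by
  simp [bowtie, projTo, hu, hv, hw]

lemma bow1XYY (χ ξ : T → T → T → ℤ) (X Y : Finset T) (xs ys : T) {u v w : T}
    (huX : u ∈ X) (huY : u ∉ Y) (hvX : v ∉ X) (hvY : v ∈ Y) (hwX : w ∉ X) (hwY : w ∈ Y) :
    bowtie χ X xs ξ Y ys u v w = ξ ys v w := by
  simp [bowtie, projTo, huX, huY, hvX, hvY, hwX, hwY]

lemma bowtie_comm (χ ξ : T → T → T → ℤ) (X Y : Finset T) (xs ys : T)
    (hdisj : Disjoint X Y) {u v w : T}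
    (hu : u ∈ X ∪ Y) (hv : v ∈ X ∪ Y) (hw : w ∈ X ∪ Y) :
    bowtie χ X xs ξ Y ys u v w = bowtie ξ Y ys χ X xs u v w := by
  have hsplit : ∀ {a : T}, a ∈ X ∪ Y → (a ∈ X ∧ a ∉ Y) ∨ (a ∉ X ∧ a ∈ Y) := by
    intro a ha
    rcases Finset.mem_union.mp ha with h | h
    · exact Or.inl ⟨h, Finset.disjoint_left.mp hdisj h⟩
    · exact Or.inr ⟨Finset.disjoint_right.mp hdisj h, h⟩
  rcases hsplit hu with ⟨h1, h2⟩ | ⟨h1, h2⟩ <;>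
    rcases hsplit hv with ⟨h3, h4⟩ | ⟨h3, h4⟩ <;>
      rcases hsplit hw with ⟨h5, h6⟩ | ⟨h5, h6⟩ <;>
        simp [bowtie, projTo, h1, h2, h3, h4, h5, h6]

lemma extreme_mono {f g : T → T → T → ℤ} {S : Finset T} {z : T}
    (h : ∀ u ∈ S, ∀ v ∈ S, ∀ w ∈ S, f u v w = g u v w) :
    ExtremeInOn f S z → ExtremeInOn g S z := by
  rintro ⟨hz, y, hyS, hyz, c, hc⟩
  refine ⟨hz, y, hyS, hyz, c, fun w hw h1 h2 => ?_⟩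
  rw [← h z hz y hyS w hw]
  exact hc w hw h1 h2

lemma extreme_congr {f g : T → T → T → ℤ} {S : Finset T} {z : T}
    (h : ∀ u ∈ S, ∀ v ∈ S, ∀ w ∈ S, f u v w = g u v w) :
    ExtremeInOn f S z ↔ ExtremeInOn g S z :=
  ⟨extreme_mono h, extreme_mono (fun u hu v hv w hw => (h u hu v hv w hw).symm)⟩

end Bowtie
section Side

open Finset

lemma extreme_bowtie_left {T : Type*} [DecidableEq T] (χ ξ : T → T → T → ℤ)
    (X Y : Finset T) (xs ys : T)
    (hdisj : Disjoint X Y) (hxs : xs ∉ X ∪ Y) (hys : ys ∉ X ∪ Y)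
    (hXcard : 2 ≤ X.card) (hYcard : 2 ≤ Y.card)
    (hχ : ChirotopeOn χ (insert xs X)) (hξ : ChirotopeOn ξ (insert ys Y))
    (hy : ExtremeInOn ξ (insert ys Y) ys) {z : T} (hz : z ∈ X) :
    ExtremeInOn (bowtie χ X xs ξ Y ys) (X ∪ Y) z ↔ ExtremeInOn χ (insert xs X) z := by
  have hxsX : xs ∉ X := fun h => hxs (Finset.mem_union_left _ h)
  have hysY : ys ∉ Y := fun h => hys (Finset.mem_union_right _ h)
  have hXY : ∀ {a : T}, a ∈ X → a ∉ Y := fun {a} h => Finset.disjoint_left.mp hdisj h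
  have hYX : ∀ {a : T}, a ∈ Y → a ∉ X := fun {a} h => Finset.disjoint_right.mp hdisj h
  have hzxs : z ≠ xs := fun h => hxsX (h ▸ hz)
  constructor
  · rintro ⟨hzS, y, hyS, hyz, c, hc⟩
    refine ⟨Finset.mem_insert_of_mem hz, ?_⟩
    rcases Finset.mem_union.mp hyS with hyX | hyY
    · refine ⟨y, Finset.mem_insert_of_mem hyX, hyz, c, ?_⟩
      intro w hwA hwz hwy
      rcases Finset.mem_insert.mp hwA with h | hwX
      · -- w = xs
        rw [h]
        obtain ⟨w', hw'⟩ : Y.Nonempty := Finset.card_pos.mp (by omega)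
        have h1 := bow2XXY χ ξ X Y xs ys hz hyX (hYX hw')
        have h2 := hc w' (Finset.mem_union_right _ hw')
          (fun h => hXY hz (h ▸ hw')) (fun h => hXY hyX (h ▸ hw'))
        rw [← h1]; exact h2
      · have h1 := bow3X χ ξ X Y xs ys hz hyX hwX
        have h2 := hc w (Finset.mem_union_left _ hwX) hwz hwy
        rw [← h1]; exact h2
    · refine ⟨xs, Finset.mem_insert_self _ _, hzxs.symm, c, ?_⟩
      intro w hwA hwz hwxs
      have hwX : w ∈ X := by
        rcases Finset.mem_insert.mp hwA with h | h
        · exact absurd h hwxs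
        · exact h
      have h1 := bow2XYX χ ξ X Y xs ys hz (hYX hyY) hwX
      have h2 := hc w (Finset.mem_union_left _ hwX) hwz (fun h => hYX hyY (h ▸ hwX))
      rw [← h1]; exact h2
  · rintro ⟨hzA, y, hyA, hyz, c, hc⟩
    refine ⟨Finset.mem_union_left _ hz, ?_⟩
    rcases Finset.mem_insert.mp hyA with h | hyX
    · -- y = xs
      rw [h] at hc
      obtain ⟨x₀, hx₀X, hx₀z⟩ := Finset.exists_mem_ne (by omega : 1 < X.card) z
      have hx₀A : x₀ ∈ insert xs X := Finset.mem_insert_of_mem hx₀X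
      have hx₀xs : x₀ ≠ xs := fun h => hxsX (h ▸ hx₀X)
      have hcval : c = 1 ∨ c = -1 := by
        have h := hc x₀ hx₀A hx₀z hx₀xs
        rcases sign_val hχ.1 (Finset.mem_insert_of_mem hz) (Finset.mem_insert_self _ _)
          hx₀A hzxs hx₀xs.symm hx₀z.symm with h1 | h1 <;> omega
      rcases hcval with rfl | rfl
      · -- c = 1 : flip on the X side
        obtain ⟨m, hmA, hmz, hmxs, hm⟩ := opp_witness hχ (Finset.mem_insert_of_mem hz)
          (Finset.mem_insert_self _ _) hzxs.symm (fun w hw h1 h2 => hc w hw h1 h2)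
          hx₀A hx₀z hx₀xs
        have hmX : m ∈ X := by
          rcases Finset.mem_insert.mp hmA with h | h
          · exact absurd h hmxs
          · exact h
        refine ⟨m, Finset.mem_union_left _ hmX, hmz, -1, ?_⟩
        intro w hwS hwz hwm
        rcases Finset.mem_union.mp hwS with hwX | hwY
        · rw [bow3X χ ξ X Y xs ys hz hmX hwX]
          exact hm w (Finset.mem_insert_of_mem hwX) hwz hwm
        · rw [bow2XXY χ ξ X Y xs ys hz hmX (hYX hwY)]
          exact hm xs (Finset.mem_insert_self _ _) hzxs.symm hmxs.symm
      · -- c = -1 : find a `Y`-side witness with constant -1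
        obtain ⟨-, y₀, hy₀B, hy₀ys, d, hd⟩ := hy
        have hy₀Y : y₀ ∈ Y := by
          rcases Finset.mem_insert.mp hy₀B with h | h
          · exact absurd h hy₀ys
          · exact h
        obtain ⟨w₀, hw₀Y, hw₀y₀⟩ := Finset.exists_mem_ne (by omega : 1 < Y.card) y₀
        have hw₀ys : w₀ ≠ ys := fun h => hysY (h ▸ hw₀Y)
        have key : ∃ y₁ ∈ Y, ∀ w ∈ Y, w ≠ y₁ → ξ ys y₁ w = -1 := by
          have hdw := hd w₀ (Finset.mem_insert_of_mem hw₀Y) hw₀ys hw₀y₀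
          rcases sign_val hξ.1 (Finset.mem_insert_self _ _) (Finset.mem_insert_of_mem hy₀Y)
            (Finset.mem_insert_of_mem hw₀Y) hy₀ys.symm hw₀y₀.symm hw₀ys.symm with h1 | h1
          · -- constant is 1 : flip on the Y side
            have hd1 : ∀ w ∈ insert ys Y, w ≠ ys → w ≠ y₀ → ξ ys y₀ w = 1 := by
              intro w hw h1' h2'
              have := hd w hw h1' h2'
              omega
            obtain ⟨m, hmB, hmys, hmy₀, hm⟩ := opp_witness hξ (Finset.mem_insert_self _ _)
              (Finset.mem_insert_of_mem hy₀Y) hy₀ys hd1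
              (Finset.mem_insert_of_mem hw₀Y) hw₀ys hw₀y₀
            have hmY : m ∈ Y := by
              rcases Finset.mem_insert.mp hmB with h | h
              · exact absurd h hmys
              · exact h
            exact ⟨m, hmY, fun w hw hwm =>
              hm w (Finset.mem_insert_of_mem hw) (fun h => hysY (h ▸ hw)) hwm⟩
          · refine ⟨y₀, hy₀Y, fun w hw hwy₀ => ?_⟩
            have := hd w (Finset.mem_insert_of_mem hw) (fun h => hysY (h ▸ hw)) hwy₀
            omega
        obtain ⟨y₁, hy₁Y, hy₁⟩ := key
        refine ⟨y₁, Finset.mem_union_right _ hy₁Y, fun h => hXY hz (h ▸ hy₁Y), -1, ?_⟩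
        intro w hwS hwz hwy₁
        rcases Finset.mem_union.mp hwS with hwX | hwY
        · rw [bow2XYX χ ξ X Y xs ys hz (hYX hy₁Y) hwX]
          exact hc w (Finset.mem_insert_of_mem hwX) hwz (fun h => hxsX (h ▸ hwX))
        · rw [bow1XYY χ ξ X Y xs ys hz (hXY hz) (hYX hy₁Y) hy₁Y (hYX hwY) hwY]
          exact hy₁ w hwY hwy₁
    · -- y ∈ X
      refine ⟨y, Finset.mem_union_left _ hyX, hyz, c, ?_⟩
      intro w hwS hwz hwy
      rcases Finset.mem_union.mp hwS with hwX | hwY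
      · rw [bow3X χ ξ X Y xs ys hz hyX hwX]
        exact hc w (Finset.mem_insert_of_mem hwX) hwz hwy
      · rw [bow2XXY χ ξ X Y xs ys hz hyX (hYX hwY)]
        exact hc xs (Finset.mem_insert_self _ _) hzxs.symm (fun h => hxsX (h ▸ hyX))

end Side

/-- The extreme elements of the bowtie `χ ⋈_{x*,y*} ξ` are
exactly the extreme elements of `χ` other than `x*` together with the extreme
elements of `ξ` other than `y*`. -/
theorem extreme_of_bowtie
    {T : Type*} [DecidableEq T] (χ ξ : T → T → T → ℤ)
    (X Y : Finset T) (xs ys : T)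
    (hdisj : Disjoint X Y) (hxs : xs ∉ X ∪ Y) (hys : ys ∉ X ∪ Y) (hxy : xs ≠ ys)
    (hXcard : 2 ≤ X.card) (hYcard : 2 ≤ Y.card)
    (hχ : ChirotopeOn χ (insert xs X)) (hξ : ChirotopeOn ξ (insert ys Y))
    (hx : ExtremeInOn χ (insert xs X) xs) (hy : ExtremeInOn ξ (insert ys Y) ys) :
    ∀ z : T, ExtremeInOn (bowtie χ X xs ξ Y ys) (X ∪ Y) z ↔
      ((z ∈ X ∧ ExtremeInOn χ (insert xs X) z) ∨
        (z ∈ Y ∧ ExtremeInOn ξ (insert ys Y) z)) := by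
  intro z
  have hleft := fun (hz : z ∈ X) =>
    extreme_bowtie_left χ ξ X Y xs ys hdisj hxs hys hXcard hYcard hχ hξ hy hz
  have hsets : Y ∪ X = X ∪ Y := Finset.union_comm _ _
  have hcongr : ExtremeInOn (bowtie ξ Y ys χ X xs) (X ∪ Y) z ↔
      ExtremeInOn (bowtie χ X xs ξ Y ys) (X ∪ Y) z :=
    extreme_congr (fun u hu v hv w hw => (bowtie_comm χ ξ X Y xs ys hdisj hu hv hw).symm)
  have hright := fun (hz : z ∈ Y) =>
    extreme_bowtie_left ξ χ Y X ys xs hdisj.symm (hsets ▸ hys) (hsets ▸ hxs)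
      hYcard hXcard hξ hχ hx hz
  constructor
  · intro h
    rcases Finset.mem_union.mp h.1 with hz | hz
    · exact Or.inl ⟨hz, (hleft hz).mp h⟩
    · refine Or.inr ⟨hz, ?_⟩
      have h' : ExtremeInOn (bowtie ξ Y ys χ X xs) (Y ∪ X) z := by
        rw [hsets]; exact hcongr.mpr h
      exact (hright hz).mp h'
  · rintro (⟨hz, he⟩ | ⟨hz, he⟩)
    · exact (hleft hz).mpr he
    · have h' := (hright hz).mpr he
      rw [hsets] at h'
      exact hcongr.mp h'
end

section
/- Let X₁ and X₂ be two modules of a chirotope κ on a finite set Z. If X₁ ∪ X₂ ≠ Z, then X₁ ∩ X₂ is also a module of κ. -/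
/-- `M` is a module of the chirotope `κ` on the whole finite set `Z`: for all
`x, x' ∈ M` and `y, y' ∉ M` one has `κ x x' y = κ x x' y'` and
`κ x y y' = κ x' y y'`. -/
def IsModule {Z : Type*} (κ : Z → Z → Z → ℤ) (M : Set Z) : Prop :=
  (∀ x ∈ M, ∀ x' ∈ M, ∀ y ∉ M, ∀ y' ∉ M, x ≠ x' → κ x x' y = κ x x' y') ∧
  (∀ x ∈ M, ∀ x' ∈ M, ∀ y ∉ M, ∀ y' ∉ M, y ≠ y' → κ x y y' = κ x' y y')

/-- If `X₁` and `X₂` are modules of a chirotope `κ` on a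
finite set `Z` and `X₁ ∪ X₂ ≠ Z`, then `X₁ ∩ X₂` is a module of `κ`. -/
theorem isModule_inter
    {Z : Type*} [Fintype Z] (κ : Z → Z → Z → ℤ) (hκ : Chirotope κ)
    (X₁ X₂ : Set Z) (h₁ : IsModule κ X₁) (h₂ : IsModule κ X₂)
    (hne : X₁ ∪ X₂ ≠ Set.univ) :
    IsModule κ (X₁ ∩ X₂) := by
  -- pick a point outside X₁ ∪ X₂
  obtain ⟨w, hw⟩ : ∃ w, w ∉ X₁ ∪ X₂ := by
    by_contra h
    push_neg at h
    exact hne (Set.eq_univ_of_forall h)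
  have hw1 : w ∉ X₁ := fun h => hw (Or.inl h)
  have hw2 : w ∉ X₂ := fun h => hw (Or.inr h)
  have sgn := hκ.1
  -- swapping the last two arguments flips the sign
  have swap23 : ∀ x y z : Z, x ≠ y → y ≠ z → x ≠ z → κ x y z = -κ x z y := by
    intro x y z hxy hyz hxz
    have h1 := (sgn x z y hxz hyz.symm hxy).2.1
    have h2 := (sgn z y x hyz.symm hxy.symm hxz.symm).2.1
    have h3 := (sgn x y z hxy hyz hxz).2.2
    omega
  constructor
  · intro x hx x' hx' y hy y' hy' hxx'
    have step : ∀ u, u ∉ X₁ ∩ X₂ → κ x x' u = κ x x' w := by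
      intro u hu
      rcases (by tauto : u ∉ X₁ ∨ u ∉ X₂) with h | h
      · exact h₁.1 x hx.1 x' hx'.1 u h w hw1 hxx'
      · exact h₂.1 x hx.2 x' hx'.2 u h w hw2 hxx'
    rw [step y hy, step y' hy']
  · intro x hx x' hx' y hy y' hy' hyy'
    rcases eq_or_ne x x' with rfl | hxx'
    · rfl
    have key : ∀ y y' : Z, y ∉ X₁ → y ∈ X₂ → y' ∈ X₁ → y' ∉ X₂ → y ≠ y' →
        κ x y y' = κ x' y y' := by
      intro a b ha1 ha2 hb1 hb2 hab
      have hxa : x ≠ a := fun h => ha1 (h ▸ hx.1)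
      have hxb : x ≠ b := fun h => hb2 (h ▸ hx.2)
      have hx'a : x' ≠ a := fun h => ha1 (h ▸ hx'.1)
      have hx'b : x' ≠ b := fun h => hb2 (h ▸ hx'.2)
      have hwa : w ≠ a := fun h => hw2 (h ▸ ha2)
      have hwb : w ≠ b := fun h => hw1 (h ▸ hb1)
      have e1 : κ x a b = -κ x b a := swap23 x a b hxa hab hxb
      have e2 : κ x b a = κ x b w := h₁.1 x hx.1 b hb1 a ha1 w hw1 hxb
      have e3 : κ x b w = κ x' b w := h₂.2 x hx.2 x' hx'.2 b hb2 w hw2 (fun h => hwb (h.symm))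
      have e4 : κ x' b w = κ x' b a := (h₁.1 x' hx'.1 b hb1 a ha1 w hw1 hx'b).symm
      have e5 : κ x' a b = -κ x' b a := swap23 x' a b hx'a hab hx'b
      omega
    rcases (by tauto : y ∉ X₁ ∨ y ∉ X₂) with hyc | hyc <;>
      rcases (by tauto : y' ∉ X₁ ∨ y' ∉ X₂) with hyc' | hyc'
    · exact h₁.2 x hx.1 x' hx'.1 y hyc y' hyc' hyy'
    · by_cases hA : y' ∈ X₁
      · by_cases hB : y ∈ X₂
        · exact key y y' hyc hB hA hyc' hyy'
        · exact h₂.2 x hx.2 x' hx'.2 y hB y' hyc' hyy'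
      · exact h₁.2 x hx.1 x' hx'.1 y hyc y' hA hyy'
    · by_cases hA : y ∈ X₁
      · by_cases hB : y' ∈ X₂
        · have := key y' y hyc' hB hA hyc hyy'.symm
          have hxy : x ≠ y := fun h => hyc (h ▸ hx.2)
          have hxy' : x ≠ y' := fun h => hyc' (h ▸ hx.1)
          have hx'y : x' ≠ y := fun h => hyc (h ▸ hx'.2)
          have hx'y' : x' ≠ y' := fun h => hyc' (h ▸ hx'.1)
          have s1 := swap23 x y y' hxy hyy' hxy'
          have s2 := swap23 x' y y' hx'y hyy' hx'y'
          omega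
        · exact h₂.2 x hx.2 x' hx'.2 y hyc y' hB hyy'
      · exact h₁.2 x hx.1 x' hx'.1 y hA y' hyc' hyy'
    · exact h₂.2 x hx.2 x' hx'.2 y hyc y' hyc' hyy'
end

section
/- Let κ = χ ⋈_{x*,y*} ξ be a bowtie of chirotopes on disjoint ground sets X∪{x*} and Y∪{y*} with x* extreme in χ and y* extreme in ξ. For any x₁,x₂ ∈ X and y₁,y₂ ∈ Y with ξ(y*,y₁,y₂)=1, the segments x₁y₁ and x₂y₂ cross in κ if and only if χ(x*,x₁,x₂)=1. -/
/-- The segments `pq` and `rs` (with pairwise distinct endpoints) cross in the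
chirotope `κ`. -/
def Crosses {T : Type*} (κ : T → T → T → ℤ) (p q r s : T) : Prop :=
  κ p q r = -(κ p q s) ∧ κ r s p = -(κ r s q)

/-- In a bowtie `κ = χ ⋈_{x*,y*} ξ`, for `x₁, x₂ ∈ X` and
`y₁, y₂ ∈ Y` with `ξ y* y₁ y₂ = 1`, the segments `x₁y₁` and `x₂y₂` cross in
`κ` iff `χ x* x₁ x₂ = 1`. -/
theorem bowtie_crosses_iff
    {T : Type*} [DecidableEq T] (χ ξ : T → T → T → ℤ)
    (X Y : Finset T) (xs ys : T)
    (hdisj : Disjoint X Y) (hxs : xs ∉ X ∪ Y) (hys : ys ∉ X ∪ Y) (hxy : xs ≠ ys)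
    (hχ : ChirotopeOn χ (insert xs X)) (hξ : ChirotopeOn ξ (insert ys Y))
    (hx : ExtremeInOn χ (insert xs X) xs) (hy : ExtremeInOn ξ (insert ys Y) ys)
    (x₁ x₂ y₁ y₂ : T) (hx₁ : x₁ ∈ X) (hx₂ : x₂ ∈ X) (hy₁ : y₁ ∈ Y)
    (hy₂ : y₂ ∈ Y) (hx12 : x₁ ≠ x₂) (hy12 : y₁ ≠ y₂)
    (hord : ξ ys y₁ y₂ = 1) :
    Crosses (bowtie χ X xs ξ Y ys) x₁ y₁ x₂ y₂ ↔ χ xs x₁ x₂ = 1 := by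

  have hxsX : xs ∉ X := fun h => hxs (Finset.mem_union_left _ h)
  have hysY : ys ∉ Y := fun h => hys (Finset.mem_union_right _ h)
  have hy₁X : y₁ ∉ X := fun h => Finset.disjoint_left.mp hdisj h hy₁
  have hy₂X : y₂ ∉ X := fun h => Finset.disjoint_left.mp hdisj h hy₂
  have hx₁Y : x₁ ∉ Y := fun h => Finset.disjoint_left.mp hdisj hx₁ h
  have hx₂Y : x₂ ∉ Y := fun h => Finset.disjoint_left.mp hdisj hx₂ h
  have hxsx1 : xs ≠ x₁ := fun h => hxsX (h ▸ hx₁)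
  have hxsx2 : xs ≠ x₂ := fun h => hxsX (h ▸ hx₂)
  have hysy1 : ys ≠ y₁ := fun h => hysY (h ▸ hy₁)
  have hysy2 : ys ≠ y₂ := fun h => hysY (h ▸ hy₂)
  obtain ⟨hsχ, -, -⟩ := hχ
  obtain ⟨hsξ, -, -⟩ := hξ
  have mxs : xs ∈ insert xs X := Finset.mem_insert_self _ _
  have mx1 : x₁ ∈ insert xs X := Finset.mem_insert_of_mem hx₁
  have mx2 : x₂ ∈ insert xs X := Finset.mem_insert_of_mem hx₂
  have mys : ys ∈ insert ys Y := Finset.mem_insert_self _ _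
  have my1 : y₁ ∈ insert ys Y := Finset.mem_insert_of_mem hy₁
  have my2 : y₂ ∈ insert ys Y := Finset.mem_insert_of_mem hy₂
  -- χ relations
  have r1 := hsχ xs mxs x₁ mx1 x₂ mx2 hxsx1 hx12 hxsx2
  have r2 := hsχ x₂ mx2 x₁ mx1 xs mxs hx12.symm hxsx1.symm hxsx2.symm
  have r3 := hsχ xs mxs x₂ mx2 x₁ mx1 hxsx2 hx12.symm hxsx1
  -- χ x₁ xs x₂ = - χ xs x₁ x₂
  have e1 : χ x₁ xs x₂ = -χ xs x₁ x₂ := by linarith [r1.2.2]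
  -- χ xs x₂ x₁ = χ x₂ x₁ xs = -χ x₁ x₂ xs = ... 
  have e2 : χ x₂ xs x₁ = χ xs x₁ x₂ := by
    have c1 : χ xs x₂ x₁ = χ x₂ x₁ xs := r3.2.1
    have c2 : χ x₂ x₁ xs = χ x₁ xs x₂ := r2.2.1
    have s1 : χ xs x₂ x₁ = -χ x₂ xs x₁ := r3.2.2
    linarith
  -- ξ relations
  have q1 := hsξ ys mys y₁ my1 y₂ my2 hysy1 hy12 hysy2
  have q2 := hsξ ys mys y₂ my2 y₁ my1 hysy2 hy12.symm hysy1
  have q3 := hsξ y₂ my2 y₁ my1 ys mys hy12.symm hysy1.symm hysy2.symm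
  have f1 : ξ ys y₂ y₁ = -1 := by
    have c1 : ξ ys y₂ y₁ = ξ y₂ y₁ ys := q2.2.1
    have c2 : ξ y₂ y₁ ys = ξ y₁ ys y₂ := q3.2.1
    have s1 : ξ ys y₁ y₂ = -ξ y₁ ys y₂ := q1.2.2
    linarith
  have key : bowtie χ X xs ξ Y ys x₁ y₁ x₂ = χ x₁ xs x₂ ∧
      bowtie χ X xs ξ Y ys x₁ y₁ y₂ = ξ ys y₁ y₂ ∧
      bowtie χ X xs ξ Y ys x₂ y₂ x₁ = χ x₂ xs x₁ ∧
      bowtie χ X xs ξ Y ys x₂ y₂ y₁ = ξ ys y₂ y₁ := by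
    refine ⟨?_, ?_, ?_, ?_⟩ <;>
      simp [bowtie, projTo, hx₁, hx₂, hy₁X, hy₂X, hx₁Y, hx₂Y, hy₁, hy₂]
  obtain ⟨k1, k2, k3, k4⟩ := key
  unfold Crosses
  rw [k1, k2, k3, k4, hord, f1, e1, e2]
  constructor
  · rintro ⟨h1, -⟩; linarith
  · intro h; constructor <;> linarith
end

section
/- Let κ = χ ⋈_{x*,y*} ξ with x* extreme in χ and y* extreme in ξ. If T is a set of pairwise noncrossing segments of κ, then its projection π_{Y→x*}(T), obtained by replacing every endpoint in Y by x* and deleting the degenerate edge {x*,x*}, is a set of pairwise noncrossing segments of χ. -/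
/-- A set of segments (unordered pairs) is pairwise noncrossing in `κ`. -/
def PairwiseNoncrossing {T : Type*} (κ : T → T → T → ℤ)
    (E : Set (Sym2 T)) : Prop :=
  ∀ p q r s : T, Sym2.mk p q ∈ E → Sym2.mk r s ∈ E →
    p ≠ q → r ≠ s → p ≠ r → p ≠ s → q ≠ r → q ≠ s → ¬ Crosses κ p q r s

/-- `E` is a set of segments with endpoints in `S`. -/
def SegmentsOn {T : Type*} (S : Finset T) (E : Set (Sym2 T)) : Prop :=
  ∀ e ∈ E, ∃ p ∈ S, ∃ q ∈ S, p ≠ q ∧ e = Sym2.mk p q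

section Projection

variable {T : Type*} [DecidableEq T]

theorem projTo_mem_insert (S : Finset T) (p u : T) : projTo S p u ∈ insert p S := by
  unfold projTo
  split_ifs with hu
  · exact Finset.mem_insert_of_mem hu
  · exact Finset.mem_insert_self p S

theorem mem_or_mem_of_projTo_ne {S : Finset T} {p a b : T}
    (h : projTo S p a ≠ projTo S p b) : a ∈ S ∨ b ∈ S := by
  by_contra! hab
  exact h (by simp only [projTo, if_neg hab.1, if_neg hab.2])

/-- Points with pairwise distinct projections have at most one element outside `X`, so the
bowtie evaluates them through `χ`. -/
theorem bowtie_eq_of_projTo_ne (χ ξ : T → T → T → ℤ) {X Y : Finset T} {xs ys u v w : T}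
    (huv : projTo X xs u ≠ projTo X xs v) (huw : projTo X xs u ≠ projTo X xs w)
    (hvw : projTo X xs v ≠ projTo X xs w) :
    bowtie χ X xs ξ Y ys u v w = χ (projTo X xs u) (projTo X xs v) (projTo X xs w) := by
  have h₁ := mem_or_mem_of_projTo_ne huv
  have h₂ := mem_or_mem_of_projTo_ne huw
  have h₃ := mem_or_mem_of_projTo_ne hvw
  have hmaj : 2 ≤ ((if u ∈ X then 1 else 0) + (if v ∈ X then 1 else 0) +
      (if w ∈ X then 1 else 0) : ℕ) := by
    split_ifs <;> simp_all
  simp only [bowtie, if_pos hmaj]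

theorem crosses_bowtie_of_crosses_projTo (χ ξ : T → T → T → ℤ) {X Y : Finset T}
    {xs ys p q r s : T} (hpq : projTo X xs p ≠ projTo X xs q)
    (hrs : projTo X xs r ≠ projTo X xs s) (hpr : projTo X xs p ≠ projTo X xs r)
    (hps : projTo X xs p ≠ projTo X xs s) (hqr : projTo X xs q ≠ projTo X xs r)
    (hqs : projTo X xs q ≠ projTo X xs s)
    (h : Crosses χ (projTo X xs p) (projTo X xs q) (projTo X xs r) (projTo X xs s)) :
    Crosses (bowtie χ X xs ξ Y ys) p q r s := by
  unfold Crosses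
  rw [bowtie_eq_of_projTo_ne χ ξ hpq hpr hqr, bowtie_eq_of_projTo_ne χ ξ hpq hps hqs,
    bowtie_eq_of_projTo_ne χ ξ hrs hpr.symm hps.symm,
    bowtie_eq_of_projTo_ne χ ξ hrs hqr.symm hqs.symm]
  exact h

end Projection

theorem Sym2.exists_mk_mem_of_mk_mem_image_map {α β : Type*} {f : α → β} {E : Set (Sym2 α)}
    {a b : β} (h : s(a, b) ∈ Sym2.map f '' E) :
    ∃ p q, s(p, q) ∈ E ∧ f p = a ∧ f q = b := by
  obtain ⟨e, he, heq⟩ := h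
  induction e using Sym2.ind with
  | h p q =>
    rcases Sym2.eq_iff.mp (by simpa only [Sym2.map_mk] using heq) with ⟨rfl, rfl⟩ | ⟨rfl, rfl⟩
    · exact ⟨p, q, he, rfl, rfl⟩
    · exact ⟨q, p, Sym2.eq_swap ▸ he, rfl, rfl⟩

theorem segmentsOn_image_map_nondiag {α β : Type*} {S : Finset β} {f : α → β}
    (hf : ∀ u, f u ∈ S) (E : Set (Sym2 α)) :
    SegmentsOn S {e | e ∈ Sym2.map f '' E ∧ ¬ e.IsDiag} := by
  rintro e ⟨⟨e₀, -, rfl⟩, hdiag⟩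
  induction e₀ using Sym2.ind with
  | h p q =>
    rw [Sym2.map_mk, Sym2.mk_isDiag_iff] at hdiag
    exact ⟨f p, hf p, f q, hf q, hdiag, Sym2.map_mk f p q⟩

theorem PairwiseNoncrossing.mono {T : Type*} {κ : T → T → T → ℤ} {E F : Set (Sym2 T)}
    (hE : PairwiseNoncrossing κ E) (hFE : F ⊆ E) : PairwiseNoncrossing κ F :=
  fun p q r s hpq hrs => hE p q r s (hFE hpq) (hFE hrs)

/-- A crossing of two projected segments lifts to a crossing of their preimages in the bowtie. -/
theorem PairwiseNoncrossing.image_projTo {T : Type*} [DecidableEq T] {χ ξ : T → T → T → ℤ}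
    {X Y : Finset T} {xs ys : T} {E : Set (Sym2 T)}
    (hnc : PairwiseNoncrossing (bowtie χ X xs ξ Y ys) E) :
    PairwiseNoncrossing χ (Sym2.map (projTo X xs) '' E) := by
  intro p q r s hpq hrs hpq' hrs' hpr hps hqr hqs hcross
  obtain ⟨p₀, q₀, he₁, rfl, rfl⟩ :=
    Sym2.exists_mk_mem_of_mk_mem_image_map (f := projTo X xs) hpq
  obtain ⟨r₀, s₀, he₂, rfl, rfl⟩ :=
    Sym2.exists_mk_mem_of_mk_mem_image_map (f := projTo X xs) hrs
  exact hnc p₀ q₀ r₀ s₀ he₁ he₂ (ne_of_apply_ne _ hpq') (ne_of_apply_ne _ hrs')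
    (ne_of_apply_ne _ hpr) (ne_of_apply_ne _ hps) (ne_of_apply_ne _ hqr) (ne_of_apply_ne _ hqs)
    (crosses_bowtie_of_crosses_projTo χ ξ hpq' hrs' hpr hps hqr hqs hcross)

theorem projection_noncrossing_general
    {T : Type*} [DecidableEq T] (χ ξ : T → T → T → ℤ)
    (X Y : Finset T) (xs ys : T)
    (E : Set (Sym2 T))
    (hnc : PairwiseNoncrossing (bowtie χ X xs ξ Y ys) E) :
    SegmentsOn (insert xs X)
        {e | e ∈ Sym2.map (projTo X xs) '' E ∧ ¬ e.IsDiag} ∧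
      PairwiseNoncrossing χ
        {e | e ∈ Sym2.map (projTo X xs) '' E ∧ ¬ e.IsDiag} :=
  ⟨segmentsOn_image_map_nondiag (projTo_mem_insert X xs) E,
    hnc.image_projTo.mono fun _ he => he.1⟩

/-- If `E` is a set of pairwise noncrossing segments of the
bowtie `κ = χ ⋈_{x*,y*} ξ`, then its projection `π_{Y→x*}(E)` — replace every
endpoint in `Y` by `x*` and delete the degenerate edge `{x*, x*}` — is a set
of pairwise noncrossing segments of `χ`. -/
theorem projection_noncrossing
    {T : Type*} [DecidableEq T] (χ ξ : T → T → T → ℤ)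
    (X Y : Finset T) (xs ys : T)
    (hdisj : Disjoint X Y) (hxs : xs ∉ X ∪ Y) (hys : ys ∉ X ∪ Y) (hxy : xs ≠ ys)
    (hχ : ChirotopeOn χ (insert xs X)) (hξ : ChirotopeOn ξ (insert ys Y))
    (hx : ExtremeInOn χ (insert xs X) xs) (hy : ExtremeInOn ξ (insert ys Y) ys)
    (E : Set (Sym2 T)) (hE : SegmentsOn (X ∪ Y) E)
    (hnc : PairwiseNoncrossing (bowtie χ X xs ξ Y ys) E) :
    SegmentsOn (insert xs X)
        {e | e ∈ Sym2.map (projTo X xs) '' E ∧ ¬ e.IsDiag} ∧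
      PairwiseNoncrossing χ
        {e | e ∈ Sym2.map (projTo X xs) '' E ∧ ¬ e.IsDiag} :=
  projection_noncrossing_general χ ξ X Y xs ys E hnc
end

section
/- In a bowtie κ = χ ⋈_{x*,y*} ξ of chirotopes, for any nonempty subsets X' ⊆ X and Y' ⊆ Y the number of maximal sets of pairwise noncrossing edges between X' and Y' equals the binomial coefficient C(|X'|+|Y'|−2, |Y'|−1). -/
/-- A finite set of segments is pairwise noncrossing in `κ`. -/
def NoncrossingF {T : Type*} (κ : T → T → T → ℤ) (E : Finset (Sym2 T)) : Prop :=
  ∀ p q r s : T, Sym2.mk p q ∈ E → Sym2.mk r s ∈ E →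
    p ≠ q → r ≠ s → p ≠ r → p ≠ s → q ≠ r → q ≠ s → ¬ Crosses κ p q r s

/-- Every element of `H` is an edge between `X'` and `Y'`. -/
def EdgesBetween {T : Type*} (X' Y' : Finset T) (H : Finset (Sym2 T)) : Prop :=
  ∀ e ∈ H, ∃ x ∈ X', ∃ y ∈ Y', e = Sym2.mk x y

/-- `H` is a maximal set of pairwise noncrossing (in `κ`) edges between `X'`
and `Y'`: no further edge between `X'` and `Y'` can be added without creating
a crossing. -/
def MaxNoncrossingBetween {T : Type*} [DecidableEq T] (κ : T → T → T → ℤ)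
    (X' Y' : Finset T) (H : Finset (Sym2 T)) : Prop :=
  EdgesBetween X' Y' H ∧ NoncrossingF κ H ∧
    ∀ x ∈ X', ∀ y ∈ Y',
      NoncrossingF κ (insert (Sym2.mk x y) H) → Sym2.mk x y ∈ H

open Classical in
/-- The degree of `v` in the finite set of segments `H`. -/
noncomputable def degF {T : Type*} (H : Finset (Sym2 T)) (v : T) : ℕ :=
  (H.filter (fun e => v ∈ e)).card

/-!
About the extreme point `x*`, the sign `χ x* a b` is a strict total order on `X` (the rotational
order: transitivity follows from the chirotope axioms and extremality), and likewise `ξ y* · ·` on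
`Y`. In the bowtie, edges `xy` and `zt` with `x ≠ z`, `y ≠ t` cross iff `χ x* x z = ξ y* y t`.
Enumerating `X'` counterclockwise about `x*` and `Y'` clockwise about `y*` turns the edges
between `X'` and `Y'` into the points of the grid `[0, |X'| - 1] × [0, |Y'| - 1]`, noncrossing
edge sets into chains of the product order, and maximal ones into maximal chains. A maximal chain
below `(m + 1, n + 1)` passes through exactly one of `(m, n + 1)` and `(m + 1, n)`, which gives
Pascal's recurrence for their number `C(m + n, n)`.
-/

def IsMaxChainIic {α : Type*} [PartialOrder α] (t : α) (S : Finset α) : Prop :=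
  (∀ p ∈ S, p ≤ t) ∧ IsChain (· ≤ ·) (S : Set α) ∧
    ∀ p ≤ t, (∀ q ∈ S, p ≤ q ∨ q ≤ p) → p ∈ S

namespace IsMaxChainIic

section PartialOrder

variable {α : Type*} [PartialOrder α] {c t : α} {S : Finset α}

theorem top_mem (h : IsMaxChainIic t S) : t ∈ S :=
  h.2.2 t le_rfl fun q hq => Or.inr (h.1 q hq)

theorem erase_top [DecidableEq α] (h : IsMaxChainIic t S) (hct : c ⋖ t) (hc : c ∈ S) :
    IsMaxChainIic c (S.erase t) := by
  have below : ∀ p ∈ S.erase t, p ≤ c := by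
    intro p hp
    obtain ⟨hpt, hpS⟩ := Finset.mem_erase.1 hp
    refine (h.2.1.total hpS hc).elim id fun hcp => ?_
    rcases hct.eq_or_eq hcp (h.1 p hpS) with rfl | rfl
    exacts [le_rfl, absurd rfl hpt]
  refine ⟨below, h.2.1.mono (Finset.coe_subset.2 (S.erase_subset t)), fun p hpc hcomp => ?_⟩
  refine Finset.mem_erase.2 ⟨(hpc.trans_lt hct.lt).ne, h.2.2 p (hpc.trans hct.le) fun q hq => ?_⟩
  by_cases hqt : q = t
  · exact Or.inl (hqt ▸ hpc.trans hct.le)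
  · exact hcomp q (Finset.mem_erase.2 ⟨hqt, hq⟩)

theorem insert_top [DecidableEq α] (h : IsMaxChainIic c S) (hct : c ⋖ t) :
    IsMaxChainIic t (insert t S) := by
  have hS : ∀ p ∈ S, p ≤ t := fun p hp => (h.1 p hp).trans hct.le
  refine ⟨?_, ?_, fun p hpt hcomp => ?_⟩
  · simpa using hS
  · rw [Finset.coe_insert]
    exact h.2.1.insert fun q hq _ => Or.inr (hS q hq)
  · rcases hcomp c (Finset.mem_insert_of_mem h.top_mem) with hpc | hcp
    · exact Finset.mem_insert_of_mem
        (h.2.2 p hpc fun q hq => hcomp q (Finset.mem_insert_of_mem hq))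
    · rcases hct.eq_or_eq hcp hpt with rfl | rfl
      · exact Finset.mem_insert_of_mem h.top_mem
      · exact Finset.mem_insert_self p S

def eraseTopEquiv [DecidableEq α] (hct : c ⋖ t) :
    {S // IsMaxChainIic t S ∧ c ∈ S} ≃ {S // IsMaxChainIic c S} where
  toFun S := ⟨S.1.erase t, S.2.1.erase_top hct S.2.2⟩
  invFun S := ⟨insert t S.1, S.2.insert_top hct, Finset.mem_insert_of_mem S.2.top_mem⟩
  left_inv S := Subtype.ext (Finset.insert_erase S.2.1.top_mem)
  right_inv S := Subtype.ext (Finset.erase_insert fun ht => (hct.lt.trans_le (S.2.1 t ht)).false)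

theorem iff_eq_Iic [LocallyFiniteOrderBot α] (htot : ∀ p ≤ t, ∀ q ≤ t, p ≤ q ∨ q ≤ p) :
    IsMaxChainIic t S ↔ S = Finset.Iic t := by
  constructor
  · intro h
    ext p
    rw [Finset.mem_Iic]
    exact ⟨h.1 p, fun hp => h.2.2 p hp fun q hq => htot p hp q (h.1 q hq)⟩
  · rintro rfl
    simp only [IsMaxChainIic, Finset.mem_Iic, Finset.coe_Iic]
    exact ⟨fun _ => id, fun p hp q hq _ => htot p hp q hq, fun p hp _ => hp⟩

theorem card_eq_one [LocallyFiniteOrderBot α] (htot : ∀ p ≤ t, ∀ q ≤ t, p ≤ q ∨ q ≤ p) :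
    Nat.card {S // IsMaxChainIic t S} = 1 := by
  rw [Nat.card_congr (Equiv.subtypeEquivRight fun S => iff_eq_Iic htot), Nat.card_unique]

instance finite [LocallyFiniteOrderBot α] (t : α) : Finite {S // IsMaxChainIic t S} :=
  Set.Finite.to_subtype ((Finset.Iic t).powerset.finite_toSet.subset fun _ hU =>
    Finset.mem_powerset.2 fun p hp => Finset.mem_Iic.2 (hU.1 p hp))

end PartialOrder

variable {m n : ℕ}

theorem mem_left_iff_not_mem_right {S : Finset (ℕ × ℕ)}
    (h : IsMaxChainIic (m + 1, n + 1) S) : (m, n + 1) ∈ S ↔ (m + 1, n) ∉ S := by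
  obtain ⟨hle, hchain, hmax⟩ := h
  refine ⟨fun h1 h2 => by simpa [Prod.le_def] using hchain.total h1 h2, fun h2 => ?_⟩
  obtain ⟨q, hq, hinc⟩ : ∃ q ∈ S, ¬((m + 1, n) ≤ q ∨ q ≤ (m + 1, n)) := by
    by_contra! hall
    exact h2 (hmax _ (by simp [Prod.le_def]) hall)
  refine hmax _ (by simp [Prod.le_def]) fun r hr => ?_
  have := hle q hq; have := hle r hr; have := hchain.total hq hr
  simp only [Prod.le_def] at *
  omega

def succEquivSum (m n : ℕ) : {S // IsMaxChainIic (m + 1, n + 1) S} ≃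
    {S // IsMaxChainIic (m, n + 1) S} ⊕ {S // IsMaxChainIic (m + 1, n) S} :=
  (Equiv.sumCompl fun S : {S // IsMaxChainIic (m + 1, n + 1) S} => (m, n + 1) ∈ S.1).symm.trans <|
    Equiv.sumCongr
      ((Equiv.subtypeSubtypeEquivSubtypeInter _ (fun S => (m, n + 1) ∈ S)).trans
        (eraseTopEquiv (Prod.mk_covBy_mk_iff_left.2 (Order.covBy_add_one m))))
      ((Equiv.subtypeSubtypeEquivSubtypeInter _ (fun S => (m, n + 1) ∉ S)).trans <|
        (Equiv.subtypeEquivRight fun _ => and_congr_right fun h => by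
          rw [h.mem_left_iff_not_mem_right, not_not]).trans
        (eraseTopEquiv (Prod.mk_covBy_mk_iff_right.2 (Order.covBy_add_one n))))

end IsMaxChainIic

theorem card_isMaxChainIic (m n : ℕ) :
    Nat.card {S // IsMaxChainIic (m, n) S} = (m + n).choose n := by
  induction m generalizing n with
  | zero =>
    rw [IsMaxChainIic.card_eq_one (by simp only [Prod.le_def]; omega), zero_add, Nat.choose_self]
  | succ m ihm =>
    induction n with
    | zero =>
      rw [IsMaxChainIic.card_eq_one (by simp only [Prod.le_def]; omega), Nat.choose_zero_right]
    | succ n ihn =>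
      rw [Nat.card_congr (IsMaxChainIic.succEquivSum m n), Nat.card_sum, ihm, ihn,
        show m + 1 + (n + 1) = m + n + 1 + 1 by ring, Nat.choose_succ_succ, add_comm,
        show m + (n + 1) = m + n + 1 by ring, show m + 1 + n = m + n + 1 by ring]

theorem Finset.exists_bijOn_Iic_of_total {T : Type*} {s : Finset T} {m : ℕ} (hs : s.card = m + 1)
    (r : T → T → Prop) (hasymm : ∀ a ∈ s, ∀ b ∈ s, a ≠ b → (r a b ↔ ¬r b a))
    (htrans : ∀ a ∈ s, ∀ b ∈ s, ∀ c ∈ s, a ≠ b → b ≠ c → a ≠ c → r a b → r b c → r a c) :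
    ∃ e : ℕ → T, Set.BijOn e (Set.Iic m) s ∧
      ∀ i ≤ m, ∀ k ≤ m, i ≠ k → (i < k ↔ r (e i) (e k)) := by
  classical
  let lt : s → s → Prop := fun a b => a ≠ b ∧ r a b
  have hasymm' : ∀ a b : s, lt a b → ¬lt b a := fun a b hab hba =>
    (hasymm a a.2 b b.2 (Subtype.coe_ne_coe.2 hab.1)).1 hab.2 hba.2
  have : IsStrictTotalOrder s lt :=
    { trichotomous a b hab hba := by
        by_contra hne
        exact hab ⟨hne, (hasymm a a.2 b b.2 (Subtype.coe_ne_coe.2 hne)).2 fun h =>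
          hba ⟨Ne.symm hne, h⟩⟩
      irrefl a h := h.1 rfl
      trans a b c hab hbc := by
        have hac : a ≠ c := by rintro rfl; exact hasymm' a b hab hbc
        exact ⟨hac, htrans a a.2 b b.2 c c.2 (Subtype.coe_ne_coe.2 hab.1)
          (Subtype.coe_ne_coe.2 hbc.1) (Subtype.coe_ne_coe.2 hac) hab.2 hbc.2⟩ }
  let := linearOrderOfSTO lt
  let f := Fintype.orderIsoFinOfCardEq s (by simpa using hs)
  have hval : ∀ i ≤ m, (Fin.ofNat (m + 1) i : ℕ) = i := fun i hi => by
    rw [Fin.val_ofNat, Nat.mod_eq_of_lt (by omega)]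
  have hinj : ∀ i ≤ m, ∀ k ≤ m, (f (Fin.ofNat (m + 1) i) : T) = f (Fin.ofNat (m + 1) k) → i = k :=
    fun i hi k hk h => by rw [← hval i hi, ← hval k hk, f.injective (Subtype.ext h)]
  refine ⟨fun i => f (Fin.ofNat (m + 1) i), ⟨fun i _ => (f _).2, hinj, fun x hx => ?_⟩,
    fun i hi k hk hik => ?_⟩
  · refine ⟨f.symm ⟨x, hx⟩, Nat.le_of_lt_succ (f.symm ⟨x, hx⟩).2, ?_⟩
    simp
  · have hlt : i < k ↔ Fin.ofNat (m + 1) i < Fin.ofNat (m + 1) k := by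
      rw [Fin.lt_def, hval i hi, hval k hk]
    rw [hlt, ← f.lt_iff_lt]
    exact ⟨And.right, fun h => ⟨fun he => hik (hinj i hi k hk (congrArg Subtype.val he)), h⟩⟩

theorem SignFnOn.swap_right {T : Type*} {χ : T → T → T → ℤ} {S : Finset T} {a b c : T}
    (h : SignFnOn χ S) (ha : a ∈ S) (hb : b ∈ S) (hc : c ∈ S) (hab : a ≠ b) (hbc : b ≠ c)
    (hac : a ≠ c) : χ a c b = -χ a b c := by
  have := (h a ha b hb c hc hab hbc hac).2.1
  have := (h a ha c hc b hb hac hbc.symm hab).2.1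
  have := (h c hc b hb a ha hbc.symm hab.symm hac.symm).2.2
  omega

namespace ChirotopeOn

variable {T : Type*} {χ : T → T → T → ℤ} {S : Finset T} {o : T}

theorem rotation_trans (hχ : ChirotopeOn χ S) (hx : ExtremeInOn χ S o) {u v w : T}
    (hu : u ∈ S) (hv : v ∈ S) (hw : w ∈ S) (hou : o ≠ u) (hov : o ≠ v) (how : o ≠ w)
    (huv : u ≠ v) (hvw : v ≠ w) (huw : u ≠ w) (h₁ : χ o u v = 1) (h₂ : χ o v w = 1) :
    χ o u w = 1 := by
  obtain ⟨hs, hint, htr⟩ := hχ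
  obtain ⟨ho, p, hp, hpo, c, hc⟩ := hx
  have := hc u hu; have := hc v hv; have := hc w hw
  by_cases hpuvw : p = u ∨ p = v ∨ p = w
  · grind [SignFnOn]
  -- `c = 1`: transitivity around `o` with pivot `p`.
  have := htr p hp o ho u hu v hv w hw
  -- `c = -1`: every point precedes `p` about `o`, and interiority puts `o` inside the triangle
  -- `uvw`; the remaining instances rule out every sign pattern of `χ p · ·` on `u, v, w`.
  have := hint o ho u hu v hv w hw
  have := hint p hp u hu w hw v hv
  have := htr o ho p hp u hu v hv w hw
  have := htr v hv u hu o ho w hw p hp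
  have := htr u hu w hw o ho v hv p hp
  have := htr w hw v hv o ho u hu p hp
  grind [SignFnOn]

/-- `ε = 1` enumerates `s` counterclockwise about `o`, `ε = -1` clockwise. -/
theorem exists_bijOn_rotation (hχ : ChirotopeOn χ S) (hx : ExtremeInOn χ S o) {s : Finset T}
    (hsS : s ⊆ S) (hos : o ∉ s) {m : ℕ} (hs : s.card = m + 1) {ε : ℤ} (hε : ε = 1 ∨ ε = -1) :
    ∃ e : ℕ → T, Set.BijOn e (Set.Iic m) s ∧
      ∀ i ≤ m, ∀ k ≤ m, i ≠ k → (i < k ↔ χ o (e i) (e k) = ε) := by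
  have ho : o ∈ S := hx.1
  have hne : ∀ a ∈ s, o ≠ a := fun a ha h => hos (h ▸ ha)
  refine s.exists_bijOn_Iic_of_total hs (fun a b => χ o a b = ε) (fun a ha b hb hab => ?_)
    fun a ha b hb c hc hab hbc hac h₁ h₂ => ?_
  · have := (hχ.1 o ho a (hsS ha) b (hsS hb) (hne a ha) hab (hne b hb)).1
    have := hχ.1.swap_right ho (hsS ha) (hsS hb) (hne a ha) hab (hne b hb)
    omega
  · rcases hε with rfl | rfl
    · exact hχ.rotation_trans hx (hsS ha) (hsS hb) (hsS hc) (hne a ha) (hne b hb) (hne c hc)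
        hab hbc hac h₁ h₂
    · have := hχ.rotation_trans hx (hsS hc) (hsS hb) (hsS ha) (hne c hc) (hne b hb) (hne a ha)
        hbc.symm hab.symm hac.symm
      have := hχ.1.swap_right ho (hsS ha) (hsS hb) (hne a ha) hab (hne b hb)
      have := hχ.1.swap_right ho (hsS hb) (hsS hc) (hne b hb) hbc (hne c hc)
      have := hχ.1.swap_right ho (hsS ha) (hsS hc) (hne a ha) hac (hne c hc)
      omega

end ChirotopeOn

theorem SignFnOn.mono {T : Type*} {χ : T → T → T → ℤ} {S S' : Finset T} (h : SignFnOn χ S)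
    (hS : S' ⊆ S) : SignFnOn χ S' :=
  fun x hx y hy z hz => h x (hS hx) y (hS hy) z (hS hz)

section Bowtie

variable {T : Type*} [DecidableEq T] {χ ξ : T → T → T → ℤ} {X Y : Finset T} {xs ys : T}

theorem bowtie_signFnOn (hχ : SignFnOn χ (insert xs X)) (hξ : SignFnOn ξ (insert ys Y))
    (hxs : xs ∉ X) (hys : ys ∉ Y) : SignFnOn (bowtie χ X xs ξ Y ys) (X ∪ Y) := by
  intro u hu v hv w hw huv hvw huw
  rw [Finset.mem_union] at hu hv hw
  by_cases hu' : u ∈ X <;> by_cases hv' : v ∈ X <;> by_cases hw' : w ∈ X <;>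
    simp only [bowtie, projTo, hu', hv', hw', if_true, if_false] <;> norm_num <;>
    first
    | exact hχ _ (by grind) _ (by grind) _ (by grind) (by grind) (by grind) (by grind)
    | exact hξ _ (by grind) _ (by grind) _ (by grind) (by grind) (by grind) (by grind)

theorem bowtie_crosses_iff_s14 (hχ : SignFnOn χ (insert xs X)) (hξ : SignFnOn ξ (insert ys Y))
    (hdisj : Disjoint X Y) (hxs : xs ∉ X) (hys : ys ∉ Y) {x z y t : T} (hx : x ∈ X) (hz : z ∈ X)
    (hy : y ∈ Y) (ht : t ∈ Y) (hxz : x ≠ z) (hyt : y ≠ t) :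
    Crosses (bowtie χ X xs ξ Y ys) x y z t ↔ χ xs x z = ξ ys y t := by
  have hyX := Finset.disjoint_right.1 hdisj hy
  have htX := Finset.disjoint_right.1 hdisj ht
  have hxY := Finset.disjoint_left.1 hdisj hx
  have hzY := Finset.disjoint_left.1 hdisj hz
  simp only [Crosses, bowtie, projTo, hx, hz, hy, ht, hyX, htX, hxY, hzY, if_true, if_false]
  norm_num
  have hxxs : x ≠ xs := fun h => hxs (h ▸ hx)
  have hzxs : z ≠ xs := fun h => hxs (h ▸ hz)
  have hyys : y ≠ ys := fun h => hys (h ▸ hy)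
  have htys : t ≠ ys := fun h => hys (h ▸ ht)
  have := Finset.mem_insert_self xs X
  have := Finset.mem_insert_self ys Y
  have := Finset.mem_insert_of_mem (s := X) (b := xs) hx
  have := Finset.mem_insert_of_mem (s := X) (b := xs) hz
  have := Finset.mem_insert_of_mem (s := Y) (b := ys) hy
  have := Finset.mem_insert_of_mem (s := Y) (b := ys) ht
  grind [SignFnOn]

end Bowtie

theorem Nat.prod_le_or_le_iff (p q : ℕ × ℕ) :
    p ≤ q ∨ q ≤ p ↔ (p.1 ≠ q.1 → p.2 ≠ q.2 → (p.1 < q.1 ↔ p.2 < q.2)) := by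
  simp only [Prod.le_def]
  omega

def gridEdge {T : Type*} (eX eY : ℕ → T) (p : ℕ × ℕ) : Sym2 T := s(eX p.1, eY p.2)

/-- Enumerations of `X'` and `Y'` under which the sets of noncrossing edges between them are the
chains of the grid `Iic (m, n)` (`noncrossingF_image_iff`). -/
structure IsGridEnumeration {T : Type*} [DecidableEq T] (κ : T → T → T → ℤ)
    (X' Y' : Finset T) (m n : ℕ) (eX eY : ℕ → T) : Prop where
  signFnOn : SignFnOn κ (X' ∪ Y')
  disjoint : Disjoint X' Y'
  bijOn_left : Set.BijOn eX (Set.Iic m) X'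
  bijOn_right : Set.BijOn eY (Set.Iic n) Y'
  not_crosses_iff : ∀ p ≤ (m, n), ∀ q ≤ (m, n), p.1 ≠ q.1 → p.2 ≠ q.2 →
    (¬Crosses κ (eX p.1) (eY p.2) (eX q.1) (eY q.2) ↔ (p.1 < q.1 ↔ p.2 < q.2))

namespace IsGridEnumeration

variable {T : Type*} [DecidableEq T] {κ : T → T → T → ℤ} {X' Y' : Finset T} {m n : ℕ}
  {eX eY : ℕ → T}

theorem left_mem (h : IsGridEnumeration κ X' Y' m n eX eY) {p : ℕ × ℕ} (hp : p ≤ (m, n)) :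
    eX p.1 ∈ X' :=
  h.bijOn_left.mapsTo (Prod.le_def.1 hp).1

theorem right_mem (h : IsGridEnumeration κ X' Y' m n eX eY) {p : ℕ × ℕ} (hp : p ≤ (m, n)) :
    eY p.2 ∈ Y' :=
  h.bijOn_right.mapsTo (Prod.le_def.1 hp).2

theorem left_ne_right (h : IsGridEnumeration κ X' Y' m n eX eY) {p q : ℕ × ℕ} (hp : p ≤ (m, n))
    (hq : q ≤ (m, n)) : eX p.1 ≠ eY q.2 := fun he =>
  Finset.disjoint_left.1 h.disjoint (h.left_mem hp) (he ▸ h.right_mem hq)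

theorem injOn_gridEdge (h : IsGridEnumeration κ X' Y' m n eX eY) :
    Set.InjOn (gridEdge eX eY) (Set.Iic (m, n)) := by
  intro p hp q hq he
  rcases Sym2.eq_iff.1 he with ⟨h₁, h₂⟩ | ⟨h₁, -⟩
  · rw [Set.mem_Iic, Prod.le_def] at hp hq
    exact Prod.ext (h.bijOn_left.injOn hp.1 hq.1 h₁) (h.bijOn_right.injOn hp.2 hq.2 h₂)
  · exact (h.left_ne_right hp hq h₁).elim

theorem noncrossingF_image_iff (h : IsGridEnumeration κ X' Y' m n eX eY)
    {S : Finset (ℕ × ℕ)} (hS : ∀ p ∈ S, p ≤ (m, n)) :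
    NoncrossingF κ (S.image (gridEdge eX eY)) ↔ IsChain (· ≤ ·) (S : Set (ℕ × ℕ)) := by
  constructor
  · intro hN p hp q hq _
    rw [Nat.prod_le_or_le_iff]
    intro h₁ h₂
    have hp' := hS p hp
    have hq' := hS q hq
    refine (h.not_crosses_iff p hp' q hq' h₁ h₂).1 (hN _ _ _ _ (Finset.mem_image_of_mem _ hp)
      (Finset.mem_image_of_mem _ hq) (h.left_ne_right hp' hp') (h.left_ne_right hq' hq')
      (fun he => h₁ ?_) (h.left_ne_right hp' hq') (h.left_ne_right hq' hp').symm
      (fun he => h₂ ?_))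
    · exact h.bijOn_left.injOn (Prod.le_def.1 hp').1 (Prod.le_def.1 hq').1 he
    · exact h.bijOn_right.injOn (Prod.le_def.1 hp').2 (Prod.le_def.1 hq').2 he
  · intro hchain a b c d hab hcd hab' hcd' hac had hbc hbd
    obtain ⟨p, hp, hpe⟩ := Finset.mem_image.1 hab
    obtain ⟨q, hq, hqe⟩ := Finset.mem_image.1 hcd
    have key : p.1 ≠ q.1 → p.2 ≠ q.2 → ¬Crosses κ (eX p.1) (eY p.2) (eX q.1) (eY q.2) :=
      fun h₁ h₂ => (h.not_crosses_iff p (hS p hp) q (hS q hq) h₁ h₂).2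
        ((Nat.prod_le_or_le_iff p q).1 (hchain.total hp hq) h₁ h₂)
    have := h.signFnOn
    have := Finset.mem_union_left Y' (h.left_mem (hS p hp))
    have := Finset.mem_union_right X' (h.right_mem (hS p hp))
    have := Finset.mem_union_left Y' (h.left_mem (hS q hq))
    have := Finset.mem_union_right X' (h.right_mem (hS q hq))
    rcases Sym2.eq_iff.1 hpe with ⟨rfl, rfl⟩ | ⟨rfl, rfl⟩ <;>
      rcases Sym2.eq_iff.1 hqe with ⟨rfl, rfl⟩ | ⟨rfl, rfl⟩ <;>
      grind [Crosses, SignFnOn]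

theorem maxNoncrossingBetween_image_iff (h : IsGridEnumeration κ X' Y' m n eX eY)
    {S : Finset (ℕ × ℕ)} (hS : ∀ p ∈ S, p ≤ (m, n)) :
    MaxNoncrossingBetween κ X' Y' (S.image (gridEdge eX eY)) ↔ IsMaxChainIic (m, n) S := by
  have hedges : EdgesBetween X' Y' (S.image (gridEdge eX eY)) := by
    intro e he
    obtain ⟨p, hp, rfl⟩ := Finset.mem_image.1 he
    exact ⟨_, h.left_mem (hS p hp), _, h.right_mem (hS p hp), rfl⟩
  have hins : ∀ p ≤ (m, n), NoncrossingF κ (insert (gridEdge eX eY p) (S.image (gridEdge eX eY)))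
      ↔ IsChain (· ≤ ·) (insert p (S : Set (ℕ × ℕ))) := fun p hp => by
    rw [← Finset.image_insert, h.noncrossingF_image_iff (Finset.forall_mem_insert _ _ _ |>.2
      ⟨hp, hS⟩), Finset.coe_insert]
  simp only [MaxNoncrossingBetween, IsMaxChainIic, h.noncrossingF_image_iff hS, hedges, true_and,
    and_iff_right hS, and_congr_right_iff]
  refine fun hchain => ⟨fun hmax p hp hcomp => ?_, fun hmax x hx y hy hN => ?_⟩
  · obtain ⟨q, hq, hqp⟩ := Finset.mem_image.1 <| hmax _ (h.left_mem hp) _ (h.right_mem hp) <|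
      (hins p hp).2 (hchain.insert fun q hq _ => hcomp q hq)
    rwa [← h.injOn_gridEdge (hS q hq) hp hqp]
  · obtain ⟨i, hi, rfl⟩ := h.bijOn_left.surjOn hx
    obtain ⟨j, hj, rfl⟩ := h.bijOn_right.surjOn hy
    have hij : (i, j) ≤ (m, n) := Prod.mk_le_mk.2 ⟨hi, hj⟩
    have hchain' := (hins (i, j) hij).1 hN
    exact Finset.mem_image_of_mem _ (hmax _ hij fun q hq =>
      hchain'.total (Set.mem_insert _ _) (Set.mem_insert_of_mem _ hq))

theorem card_maxNoncrossingBetween (h : IsGridEnumeration κ X' Y' m n eX eY) :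
    Nat.card {H // MaxNoncrossingBetween κ X' Y' H} = Nat.card {S // IsMaxChainIic (m, n) S} := by
  refine (Nat.card_eq_of_bijective (fun S => ⟨S.1.image (gridEdge eX eY),
    (h.maxNoncrossingBetween_image_iff S.2.1).2 S.2⟩) ⟨fun S S' he => ?_, fun H => ?_⟩).symm
  · have he' := congrArg (fun H => ((H.1 : Finset (Sym2 T)) : Set (Sym2 T))) he
    simp only [Finset.coe_image] at he'
    exact Subtype.ext (Finset.coe_inj.1 ((h.injOn_gridEdge.image_eq_image_iff
      (fun p hp => S.2.1 p hp) (fun p hp => S'.2.1 p hp)).1 he'))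
  · obtain ⟨H, hH⟩ := H
    have hsub : H ⊆ (Finset.Iic (m, n)).image (gridEdge eX eY) := by
      intro e he
      obtain ⟨x, hx, y, hy, rfl⟩ := hH.1 e he
      obtain ⟨i, hi, rfl⟩ := h.bijOn_left.surjOn hx
      obtain ⟨j, hj, rfl⟩ := h.bijOn_right.surjOn hy
      have hij : (i, j) ≤ (m, n) := Prod.mk_le_mk.2 ⟨hi, hj⟩
      exact Finset.mem_image_of_mem _ (Finset.mem_Iic.2 hij)
    obtain ⟨S, hS, rfl⟩ := Finset.subset_image_iff.1 hsub
    have hS' : ∀ p ∈ S, p ≤ (m, n) := fun p hp => Finset.mem_Iic.1 (hS hp)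
    exact ⟨⟨S, (h.maxNoncrossingBetween_image_iff hS').1 hH⟩, rfl⟩

end IsGridEnumeration

theorem isGridEnumeration_bowtie {T : Type*} [DecidableEq T] {χ ξ : T → T → T → ℤ}
    {X Y X' Y' : Finset T} {xs ys : T} {m n : ℕ} {eX eY : ℕ → T}
    (hχ : SignFnOn χ (insert xs X)) (hξ : SignFnOn ξ (insert ys Y)) (hdisj : Disjoint X Y)
    (hxs : xs ∉ X) (hys : ys ∉ Y) (hX' : X' ⊆ X) (hY' : Y' ⊆ Y)
    (heX : Set.BijOn eX (Set.Iic m) X') (heY : Set.BijOn eY (Set.Iic n) Y')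
    (hordX : ∀ i ≤ m, ∀ k ≤ m, i ≠ k → (i < k ↔ χ xs (eX i) (eX k) = 1))
    (hordY : ∀ j ≤ n, ∀ l ≤ n, j ≠ l → (j < l ↔ ξ ys (eY j) (eY l) = -1)) :
    IsGridEnumeration (bowtie χ X xs ξ Y ys) X' Y' m n eX eY := by
  refine ⟨(bowtie_signFnOn hχ hξ hxs hys).mono (Finset.union_subset_union hX' hY'),
    hdisj.mono hX' hY', heX, heY, fun p hp q hq h₁ h₂ => ?_⟩
  rw [Prod.le_def] at hp hq
  have hx := hX' (heX.mapsTo hp.1)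
  have hz := hX' (heX.mapsTo hq.1)
  have hy := hY' (heY.mapsTo hp.2)
  have ht := hY' (heY.mapsTo hq.2)
  have hxz : eX p.1 ≠ eX q.1 := heX.injOn.ne hp.1 hq.1 h₁
  have hyt : eY p.2 ≠ eY q.2 := heY.injOn.ne hp.2 hq.2 h₂
  have := (hχ xs (X.mem_insert_self xs) _ (Finset.mem_insert_of_mem hx) _
    (Finset.mem_insert_of_mem hz) (fun h => hxs (h ▸ hx)) hxz fun h => hxs (h ▸ hz)).1
  have := (hξ ys (Y.mem_insert_self ys) _ (Finset.mem_insert_of_mem hy) _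
    (Finset.mem_insert_of_mem ht) (fun h => hys (h ▸ hy)) hyt fun h => hys (h ▸ ht)).1
  rw [bowtie_crosses_iff_s14 hχ hξ hdisj hxs hys hx hz hy ht hxz hyt, hordX _ hp.1 _ hq.1 h₁,
    hordY _ hp.2 _ hq.2 h₂]
  omega

theorem card_maxNoncrossing_general
    {T : Type*} [DecidableEq T] (χ ξ : T → T → T → ℤ)
    (X Y : Finset T) (xs ys : T)
    (hdisj : Disjoint X Y) (hxs : xs ∉ X ∪ Y) (hys : ys ∉ X ∪ Y)
    (hχ : ChirotopeOn χ (insert xs X)) (hξ : ChirotopeOn ξ (insert ys Y))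
    (hx : ExtremeInOn χ (insert xs X) xs) (hy : ExtremeInOn ξ (insert ys Y) ys)
    (X' Y' : Finset T) (hX' : X' ⊆ X) (hY' : Y' ⊆ Y)
    (hX'ne : X'.Nonempty) (hY'ne : Y'.Nonempty) :
    Nat.card {H : Finset (Sym2 T) //
        MaxNoncrossingBetween (bowtie χ X xs ξ Y ys) X' Y' H} =
      Nat.choose (X'.card + Y'.card - 2) (Y'.card - 1) := by
  have hxsX : xs ∉ X := fun h => hxs (Finset.mem_union_left Y h)
  have hysY : ys ∉ Y := fun h => hys (Finset.mem_union_right X h)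
  obtain ⟨m, hm⟩ := Nat.exists_eq_add_one_of_ne_zero (Finset.card_ne_zero.2 hX'ne)
  obtain ⟨n, hn⟩ := Nat.exists_eq_add_one_of_ne_zero (Finset.card_ne_zero.2 hY'ne)
  obtain ⟨eX, heX, hordX⟩ := hχ.exists_bijOn_rotation hx (hX'.trans (X.subset_insert xs))
    (fun h => hxsX (hX' h)) hm (Or.inl rfl)
  obtain ⟨eY, heY, hordY⟩ := hξ.exists_bijOn_rotation hy (hY'.trans (Y.subset_insert ys))
    (fun h => hysY (hY' h)) hn (Or.inr rfl)
  rw [(isGridEnumeration_bowtie hχ.1 hξ.1 hdisj hxsX hysY hX' hY' heX heY hordX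
    hordY).card_maxNoncrossingBetween, card_isMaxChainIic, hm, hn,
    show m + 1 + (n + 1) - 2 = m + n by omega, Nat.add_sub_cancel]

/-- In a bowtie `κ = χ ⋈_{x*,y*} ξ`, for any nonempty
`X' ⊆ X` and `Y' ⊆ Y`, the number of maximal sets of pairwise noncrossing
edges between `X'` and `Y'` is `C(|X'| + |Y'| − 2, |Y'| − 1)`. -/
theorem card_maxNoncrossing
    {T : Type*} [DecidableEq T] (χ ξ : T → T → T → ℤ)
    (X Y : Finset T) (xs ys : T)
    (hdisj : Disjoint X Y) (hxs : xs ∉ X ∪ Y) (hys : ys ∉ X ∪ Y) (hxy : xs ≠ ys)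
    (hχ : ChirotopeOn χ (insert xs X)) (hξ : ChirotopeOn ξ (insert ys Y))
    (hx : ExtremeInOn χ (insert xs X) xs) (hy : ExtremeInOn ξ (insert ys Y) ys)
    (X' Y' : Finset T) (hX' : X' ⊆ X) (hY' : Y' ⊆ Y)
    (hX'ne : X'.Nonempty) (hY'ne : Y'.Nonempty) :
    Nat.card {H : Finset (Sym2 T) //
        MaxNoncrossingBetween (bowtie χ X xs ξ Y ys) X' Y' H} =
      Nat.choose (X'.card + Y'.card - 2) (Y'.card - 1) :=
  card_maxNoncrossing_general χ ξ X Y xs ys hdisj hxs hys hχ hξ hx hy X' Y' hX' hY' hX'ne hY'ne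
end

section
/- Let χ be a chirotope on X and W ⊆ X a quasi-module of χ with |W| ≥ 2. Then there exists a unique unordered pair {w₁, w₂} ⊆ W such that for all a ∈ X\W and all w ∈ W\{w₁,w₂}, the values χ(a,w₁,w) and χ(a,w,w₂) are equal and independent of w. -/
/-- The positive part of the bipartition of `X \ W` induced by the pair
`(a, b)`: the elements `y ∉ W` with `χ a b y = 1`. -/
def posSide {X : Type*} (χ : X → X → X → ℤ) (W : Set X) (a b : X) : Set X :=
  {y | y ∉ W ∧ χ a b y = 1}

/-- The negative part of the bipartition of `X \ W` induced by `(a, b)`. -/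
def negSide {X : Type*} (χ : X → X → X → ℤ) (W : Set X) (a b : X) : Set X :=
  {y | y ∉ W ∧ χ a b y = -1}

/-- `W` is a quasi-module of `χ`: every pair of distinct elements of `W`
induces the same (unordered) bipartition of the complement of `W`, and this
bipartition is nontrivial. -/
def IsQuasiModule {X : Type*} (χ : X → X → X → ℤ) (W : Set X) : Prop :=
  (∀ a ∈ W, ∀ b ∈ W, a ≠ b → ∀ a' ∈ W, ∀ b' ∈ W, a' ≠ b' →
    (posSide χ W a b = posSide χ W a' b' ∧
      negSide χ W a b = negSide χ W a' b') ∨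
    (posSide χ W a b = negSide χ W a' b' ∧
      negSide χ W a b = posSide χ W a' b')) ∧
  (∀ a ∈ W, ∀ b ∈ W, a ≠ b →
    (posSide χ W a b).Nonempty ∧ (negSide χ W a b).Nonempty)

/-- The property characterizing the pair of antipodal elements `{w₁, w₂}` of a
quasi-module `W`: for every `a ∉ W` the values `χ a w₁ w` and `χ a w w₂` are
equal and independent of `w ∈ W \ {w₁, w₂}`. -/
def IsAntipodalPair {X : Type*} (χ : X → X → X → ℤ) (W : Set X)
    (w₁ w₂ : X) : Prop :=
  w₁ ∈ W ∧ w₂ ∈ W ∧ w₁ ≠ w₂ ∧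
    ∀ a, a ∉ W → ∃ c : ℤ, ∀ w ∈ W, w ≠ w₁ → w ≠ w₂ →
      χ a w₁ w = c ∧ χ a w w₂ = c

/-- Every nonempty finite subset of `W` has a "least" element for a relation
that is total and transitive on `W`. -/
lemma exists_rel_min {X : Type*} (r : X → X → Prop) (W : Set X)
    (htot : ∀ u ∈ W, ∀ v ∈ W, u ≠ v → r u v ∨ r v u)
    (htrans : ∀ u ∈ W, ∀ v ∈ W, ∀ z ∈ W, u ≠ v → v ≠ z → u ≠ z →
      r u v → r v z → r u z) :
    ∀ S : Finset X, (∀ x ∈ S, x ∈ W) → S.Nonempty →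
      ∃ m ∈ S, ∀ u ∈ S, u ≠ m → r m u := by
  classical
  intro S
  induction S using Finset.induction_on with
  | empty => intro _ h; exact absurd h (by simp)
  | @insert a s ha ih =>
    intro hsub _
    by_cases hs : s.Nonempty
    · obtain ⟨m, hm, hmin⟩ := ih (fun x hx => hsub x (Finset.mem_insert_of_mem hx)) hs
      have haW : a ∈ W := hsub _ (Finset.mem_insert_self a s)
      have hmW : m ∈ W := hsub m (Finset.mem_insert_of_mem hm)
      have ham : a ≠ m := fun h => ha (h ▸ hm)
      rcases htot a haW m hmW ham with h1 | h2
      · refine ⟨a, Finset.mem_insert_self _ _, ?_⟩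
        intro u hu hua
        rcases Finset.mem_insert.1 hu with rfl | hus
        · exact absurd rfl hua
        · by_cases hum : u = m
          · exact hum ▸ h1
          · exact htrans a haW m hmW u (hsub u (Finset.mem_insert_of_mem hus))
              ham (fun h => hum h.symm) (fun h => ha (h ▸ hus)) h1
              (hmin u hus hum)
      · refine ⟨m, Finset.mem_insert_of_mem hm, ?_⟩
        intro u hu hum
        rcases Finset.mem_insert.1 hu with rfl | hus
        · exact h2
        · exact hmin u hus hum
    · rw [Finset.not_nonempty_iff_eq_empty] at hs
      subst hs
      refine ⟨a, Finset.mem_insert_self _ _, ?_⟩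
      intro u hu hua
      rcases Finset.mem_insert.1 hu with rfl | hus
      · exact absurd rfl hua
      · exact absurd hus (Finset.notMem_empty u)

theorem quasiModule_antipodal_pair
    {X : Type*} [Fintype X] (χ : X → X → X → ℤ) (hχ : Chirotope χ)
    (W : Set X) (hW : IsQuasiModule χ W) (hW2 : 2 ≤ W.ncard) :
    ∃ w₁ w₂ : X, IsAntipodalPair χ W w₁ w₂ ∧
      ∀ w₁' w₂' : X, IsAntipodalPair χ W w₁' w₂' →
        (w₁' = w₁ ∧ w₂' = w₂) ∨ (w₁' = w₂ ∧ w₂' = w₁) := by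
  classical
  obtain ⟨hs, hint, -⟩ := hχ
  have hval : ∀ x y z : X, x ≠ y → y ≠ z → x ≠ z →
      χ x y z = 1 ∨ χ x y z = -1 := fun x y z h1 h2 h3 => (hs x y z h1 h2 h3).1
  have hcyc : ∀ x y z : X, x ≠ y → y ≠ z → x ≠ z → χ x y z = χ y z x :=
    fun x y z h1 h2 h3 => (hs x y z h1 h2 h3).2.1
  have hswap12 : ∀ x y z : X, x ≠ y → y ≠ z → x ≠ z → χ x y z = -χ y x z :=
    fun x y z h1 h2 h3 => (hs x y z h1 h2 h3).2.2
  have hswap23 : ∀ x y z : X, x ≠ y → y ≠ z → x ≠ z → χ x y z = -χ x z y := by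
    intro x y z h1 h2 h3
    have e1 := hcyc x z y h3 h2.symm h1
    have e2 := hswap12 z y x h2.symm h1.symm h3.symm
    have e3 := hcyc x y z h1 h2 h3
    have e4 := hcyc y z x h2 h3.symm h1.symm
    linarith
  have hWfin : W.Finite := Set.toFinite W
  obtain ⟨w0, w0', hw0, hw0', hne0⟩ :=
    (Set.one_lt_ncard_iff hWfin).1 (by omega)
  obtain ⟨⟨a, haP⟩, ⟨b, hbN⟩⟩ := hW.2 w0 hw0 w0' hw0' hne0
  have haW : a ∉ W := haP.1
  have hbW : b ∉ W := hbN.1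
  -- elements off `W` on the positive side of `(w0, w0')` see every chord
  -- the same way as `a`; elements on the negative side see it oppositely.
  have hpairP : ∀ u ∈ W, ∀ v ∈ W, u ≠ v → ∀ p, p ∉ W → χ w0 w0' p = 1 →
      χ u v p = χ u v a := by
    intro u hu v hv huv p hp hp1
    rcases hW.1 u hu v hv huv w0 hw0 w0' hw0' hne0 with ⟨h1, _⟩ | ⟨_, h2⟩
    · have hpm : p ∈ posSide χ W u v := h1 ▸ (⟨hp, hp1⟩ : p ∈ posSide χ W w0 w0')
      have ham : a ∈ posSide χ W u v := h1 ▸ haP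
      rw [hpm.2, ham.2]
    · have hpm : p ∈ negSide χ W u v := h2 ▸ (⟨hp, hp1⟩ : p ∈ posSide χ W w0 w0')
      have ham : a ∈ negSide χ W u v := h2 ▸ haP
      rw [hpm.2, ham.2]
  have hpairN : ∀ u ∈ W, ∀ v ∈ W, u ≠ v → ∀ p, p ∉ W → χ w0 w0' p = -1 →
      χ u v p = -χ u v a := by
    intro u hu v hv huv p hp hp1
    rcases hW.1 u hu v hv huv w0 hw0 w0' hw0' hne0 with ⟨h1, h2⟩ | ⟨h1, h2⟩
    · have hpm : p ∈ negSide χ W u v := h2 ▸ (⟨hp, hp1⟩ : p ∈ negSide χ W w0 w0')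
      have ham : a ∈ posSide χ W u v := h1 ▸ haP
      simp [hpm.2, ham.2]
    · have hpm : p ∈ posSide χ W u v := h1 ▸ (⟨hp, hp1⟩ : p ∈ negSide χ W w0 w0')
      have ham : a ∈ negSide χ W u v := h2 ▸ haP
      simp [hpm.2, ham.2]
  have hside : ∀ p, p ∉ W → χ w0 w0' p = 1 ∨ χ w0 w0' p = -1 := by
    intro p hp
    exact hval w0 w0' p hne0 (fun h => hp (h ▸ hw0')) (fun h => hp (h ▸ hw0))
  have hneqa : ∀ u ∈ W, a ≠ u := fun u hu h => haW (h ▸ hu)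
  have hneqb : ∀ u ∈ W, b ≠ u := fun u hu h => hbW (h ▸ hu)
  -- `b` is on the opposite side of every chord of `W` from `a`.
  have hab : ∀ u ∈ W, ∀ v ∈ W, u ≠ v → χ u v b = -χ u v a :=
    fun u hu v hv huv => hpairN u hu v hv huv b hbW hbN.2
  -- the relation `χ a · · = 1` is total on `W` ...
  have htot : ∀ u ∈ W, ∀ v ∈ W, u ≠ v → χ a u v = 1 ∨ χ a v u = 1 := by
    intro u hu v hv huv
    rcases hval a u v (hneqa u hu) huv (hneqa v hv) with h | h
    · exact Or.inl h
    · right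
      have := hswap23 a u v (hneqa u hu) huv (hneqa v hv)
      linarith
  -- ... and transitive on `W`.
  have htr : ∀ u ∈ W, ∀ v ∈ W, ∀ z ∈ W, u ≠ v → v ≠ z → u ≠ z →
      χ a u v = 1 → χ a v z = 1 → χ a u z = 1 := by
    intro u hu v hv z hz huv hvz huz h1 h2
    by_contra hne
    have h3 : χ a z u = 1 := by
      rcases hval a u z (hneqa u hu) huz (hneqa z hz) with h | h
      · exact absurd h hne
      · have := hswap23 a u z (hneqa u hu) huz (hneqa z hz)
        linarith
    -- `a` lies in the counterclockwise triangle `u v z`, hence `χ u v z = 1`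
    have hpos : χ u v z = 1 := by
      refine hint a u v z (hneqa u hu) (hneqa v hv) (hneqa z hz) huv huz hvz h2 ?_ ?_
      · have e1 := hcyc a z u (hneqa z hz) huz.symm (hneqa u hu)
        have e2 := hcyc z u a huz.symm (hneqa u hu).symm (hneqa z hz).symm
        linarith
      · have := hcyc a u v (hneqa u hu) huv (hneqa v hv)
        linarith
    -- while `b` lies in the clockwise one, hence `χ v u z = 1`: contradiction
    have hb1 : χ u v b = -1 := by
      have e := hab u hu v hv huv
      have e2 := hcyc a u v (hneqa u hu) huv (hneqa v hv)
      have e3 := hcyc u v a huv (hneqa v hv).symm (hneqa u hu).symm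
      linarith
    have hb2 : χ v z b = -1 := by
      have e := hab v hv z hz hvz
      have e2 := hcyc a v z (hneqa v hv) hvz (hneqa z hz)
      have e3 := hcyc v z a hvz (hneqa z hz).symm (hneqa v hv).symm
      linarith
    have hb3 : χ z u b = -1 := by
      have e := hab z hz u hu huz.symm
      have e2 := hcyc a z u (hneqa z hz) huz.symm (hneqa u hu)
      have e3 := hcyc z u a huz.symm (hneqa u hu).symm (hneqa z hz).symm
      linarith
    have hneg : χ v u z = 1 := by
      refine hint b v u z (hneqb v hv) (hneqb u hu) (hneqb z hz)
        huv.symm hvz huz ?_ ?_ ?_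
      · -- χ b u z = 1, from χ z u b = -1, i.e. χ u z b = 1
        have e1 := hswap12 z u b huz.symm (hneqb u hu).symm (hneqb z hz).symm
        have e2 := hcyc u z b huz (hneqb z hz).symm (hneqb u hu).symm
        have e3 := hcyc z b u (hneqb z hz).symm (hneqb u hu) huz.symm
        linarith
      · -- χ v b z = 1, from χ v z b = -1
        have e1 := hswap23 v b z (hneqb v hv).symm (hneqb z hz) hvz
        linarith
      · -- χ v u b = 1, from χ u v b = -1
        have e1 := hswap12 u v b huv (hneqb v hv).symm (hneqb u hu).symm
        linarith
    have := hswap12 u v z huv hvz huz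
    linarith
  -- extract the minimum `w₁` and maximum `w₂` of this linear order on `W`
  have hWne : hWfin.toFinset.Nonempty := by
    rw [Set.Finite.toFinset_nonempty]; exact ⟨w0, hw0⟩
  have hsubW : ∀ x ∈ hWfin.toFinset, x ∈ W := fun x hx =>
    (Set.Finite.mem_toFinset hWfin).1 hx
  obtain ⟨w₁, hw₁S, hmin'⟩ :=
    exists_rel_min (fun u v => χ a u v = 1) W htot htr hWfin.toFinset hsubW hWne
  obtain ⟨w₂, hw₂S, hmax'⟩ :=
    exists_rel_min (fun u v => χ a v u = 1) W
      (fun u hu v hv huv => htot v hv u hu huv.symm)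
      (fun u hu v hv z hz huv hvz huz h1 h2 =>
        htr z hz v hv u hu hvz.symm huv.symm huz.symm h2 h1)
      hWfin.toFinset hsubW hWne
  have hw₁W : w₁ ∈ W := hsubW _ hw₁S
  have hw₂W : w₂ ∈ W := hsubW _ hw₂S
  have hmin : ∀ u ∈ W, u ≠ w₁ → χ a w₁ u = 1 := fun u hu h =>
    hmin' u ((Set.Finite.mem_toFinset hWfin).2 hu) h
  have hmax : ∀ u ∈ W, u ≠ w₂ → χ a u w₂ = 1 := fun u hu h =>
    hmax' u ((Set.Finite.mem_toFinset hWfin).2 hu) h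
  have hw₁₂ : w₁ ≠ w₂ := by
    intro h
    subst h
    have hu : w0 ≠ w₁ ∨ w0' ≠ w₁ := by
      by_contra hc
      push_neg at hc
      exact hne0 (hc.1.trans hc.2.symm)
    rcases hu with hu | hu
    · have e1 := hmin w0 hw0 hu
      have e2 := hmax w0 hw0 hu
      have := hswap23 a w₁ w0 (hneqa w₁ hw₁W) hu.symm (hneqa w0 hw0)
      linarith
    · have e1 := hmin w0' hw0' hu
      have e2 := hmax w0' hw0' hu
      have := hswap23 a w₁ w0' (hneqa w₁ hw₁W) hu.symm (hneqa w0' hw0')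
      linarith
  -- `w₁, w₂` form an antipodal pair
  have hanti : IsAntipodalPair χ W w₁ w₂ := by
    refine ⟨hw₁W, hw₂W, hw₁₂, ?_⟩
    intro p hp
    have hnp : ∀ u ∈ W, p ≠ u := fun u hu h => hp (h ▸ hu)
    rcases hside p hp with h | h
    · refine ⟨1, ?_⟩
      intro w hwW hww₁ hww₂
      constructor
      · have e1 := hpairP w₁ hw₁W w hwW hww₁.symm p hp h
        have e2 := hcyc p w₁ w (hnp w₁ hw₁W) hww₁.symm (hnp w hwW)
        have e3 := hcyc w₁ w p hww₁.symm (hnp w hwW).symm (hnp w₁ hw₁W).symm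
        have e4 := hcyc a w₁ w (hneqa w₁ hw₁W) hww₁.symm (hneqa w hwW)
        have e5 := hcyc w₁ w a hww₁.symm (hneqa w hwW).symm (hneqa w₁ hw₁W).symm
        have e6 := hmin w hwW hww₁
        linarith
      · have e1 := hpairP w hwW w₂ hw₂W hww₂ p hp h
        have e2 := hcyc p w w₂ (hnp w hwW) hww₂ (hnp w₂ hw₂W)
        have e3 := hcyc w w₂ p hww₂ (hnp w₂ hw₂W).symm (hnp w hwW).symm
        have e4 := hcyc a w w₂ (hneqa w hwW) hww₂ (hneqa w₂ hw₂W)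
        have e5 := hcyc w w₂ a hww₂ (hneqa w₂ hw₂W).symm (hneqa w hwW).symm
        have e6 := hmax w hwW hww₂
        linarith
    · refine ⟨-1, ?_⟩
      intro w hwW hww₁ hww₂
      constructor
      · have e1 := hpairN w₁ hw₁W w hwW hww₁.symm p hp h
        have e2 := hcyc p w₁ w (hnp w₁ hw₁W) hww₁.symm (hnp w hwW)
        have e3 := hcyc w₁ w p hww₁.symm (hnp w hwW).symm (hnp w₁ hw₁W).symm
        have e4 := hcyc a w₁ w (hneqa w₁ hw₁W) hww₁.symm (hneqa w hwW)
        have e5 := hcyc w₁ w a hww₁.symm (hneqa w hwW).symm (hneqa w₁ hw₁W).symm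
        have e6 := hmin w hwW hww₁
        linarith
      · have e1 := hpairN w hwW w₂ hw₂W hww₂ p hp h
        have e2 := hcyc p w w₂ (hnp w hwW) hww₂ (hnp w₂ hw₂W)
        have e3 := hcyc w w₂ p hww₂ (hnp w₂ hw₂W).symm (hnp w hwW).symm
        have e4 := hcyc a w w₂ (hneqa w hwW) hww₂ (hneqa w₂ hw₂W)
        have e5 := hcyc w w₂ a hww₂ (hneqa w₂ hw₂W).symm (hneqa w hwW).symm
        have e6 := hmax w hwW hww₂
        linarith
  refine ⟨w₁, w₂, hanti, ?_⟩
  -- uniqueness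
  rintro w₁' w₂' ⟨hw₁'W, hw₂'W, hne', hprop⟩
  obtain ⟨c, hc⟩ := hprop a haW
  by_cases hex : ∃ w ∈ W, w ≠ w₁' ∧ w ≠ w₂'
  · obtain ⟨w, hwW, hww1, hww2⟩ := hex
    obtain ⟨hc1, hc2⟩ := hc w hwW hww1 hww2
    rcases hval a w₁' w (hneqa w₁' hw₁'W) hww1.symm (hneqa w hwW) with hcv | hcv
    · -- `c = 1`: `w₁'` is the minimum and `w₂'` the maximum
      have hcval : c = 1 := by rw [← hc1]; exact hcv
      subst hcval
      have h12 : χ a w₁' w₂' = 1 :=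
        htr w₁' hw₁'W w hwW w₂' hw₂'W hww1.symm hww2 hne' hc1 hc2
      have hminall : ∀ u ∈ W, u ≠ w₁' → χ a w₁' u = 1 := by
        intro u hu hu1
        by_cases hu2 : u = w₂'
        · exact hu2 ▸ h12
        · exact (hc u hu hu1 hu2).1
      have hmaxall : ∀ u ∈ W, u ≠ w₂' → χ a u w₂' = 1 := by
        intro u hu hu2
        by_cases hu1 : u = w₁'
        · exact hu1 ▸ h12
        · exact (hc u hu hu1 hu2).2
      have e1 : w₁' = w₁ := by
        by_contra hneq
        have p1 := hmin w₁' hw₁'W hneq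
        have p2 := hminall w₁ hw₁W (fun h => hneq h.symm)
        have := hswap23 a w₁ w₁' (hneqa w₁ hw₁W) (fun h => hneq h.symm)
          (hneqa w₁' hw₁'W)
        linarith
      have e2 : w₂' = w₂ := by
        by_contra hneq
        have p1 := hmax w₂' hw₂'W hneq
        have p2 := hmaxall w₂ hw₂W (fun h => hneq h.symm)
        have := hswap23 a w₂' w₂ (hneqa w₂' hw₂'W) hneq (hneqa w₂ hw₂W)
        linarith
      exact Or.inl ⟨e1, e2⟩
    · -- `c = -1`: `w₂'` is the minimum and `w₁'` the maximum
      have hcval : c = -1 := by rw [← hc1]; exact hcv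
      subst hcval
      -- reversed inequalities
      have hc1' : ∀ u ∈ W, u ≠ w₁' → u ≠ w₂' → χ a u w₁' = 1 := by
        intro u hu hu1 hu2
        have h := (hc u hu hu1 hu2).1
        have := hswap23 a w₁' u (hneqa w₁' hw₁'W) (fun h' => hu1 h'.symm)
          (hneqa u hu)
        linarith
      have hc2' : ∀ u ∈ W, u ≠ w₁' → u ≠ w₂' → χ a w₂' u = 1 := by
        intro u hu hu1 hu2
        have h := (hc u hu hu1 hu2).2
        have := hswap23 a u w₂' (hneqa u hu) hu2 (hneqa w₂' hw₂'W)
        linarith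
      have h21 : χ a w₂' w₁' = 1 :=
        htr w₂' hw₂'W w hwW w₁' hw₁'W hww2.symm hww1 hne'.symm
          (hc2' w hwW hww1 hww2) (hc1' w hwW hww1 hww2)
      have hminall : ∀ u ∈ W, u ≠ w₂' → χ a w₂' u = 1 := by
        intro u hu hu2
        by_cases hu1 : u = w₁'
        · exact hu1 ▸ h21
        · exact hc2' u hu hu1 hu2
      have hmaxall : ∀ u ∈ W, u ≠ w₁' → χ a u w₁' = 1 := by
        intro u hu hu1
        by_cases hu2 : u = w₂'
        · exact hu2 ▸ h21
        · exact hc1' u hu hu1 hu2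
      have e1 : w₂' = w₁ := by
        by_contra hneq
        have p1 := hmin w₂' hw₂'W hneq
        have p2 := hminall w₁ hw₁W (fun h => hneq h.symm)
        have := hswap23 a w₁ w₂' (hneqa w₁ hw₁W) (fun h => hneq h.symm)
          (hneqa w₂' hw₂'W)
        linarith
      have e2 : w₁' = w₂ := by
        by_contra hneq
        have p1 := hmax w₁' hw₁'W hneq
        have p2 := hmaxall w₂ hw₂W (fun h => hneq h.symm)
        have := hswap23 a w₁' w₂ (hneqa w₁' hw₁'W) hneq (hneqa w₂ hw₂W)
        linarith
      exact Or.inr ⟨e2, e1⟩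
  · push_neg at hex
    have hmem : ∀ u ∈ W, u = w₁' ∨ u = w₂' := by
      intro u hu
      by_cases h1 : u = w₁'
      · exact Or.inl h1
      · exact Or.inr (hex u hu h1)
    rcases hmem w₁ hw₁W with h1 | h1
    · rcases hmem w₂ hw₂W with h2 | h2
      · exact absurd (h1.trans h2.symm) hw₁₂
      · exact Or.inl ⟨h1.symm, h2.symm⟩
    · rcases hmem w₂ hw₂W with h2 | h2
      · exact Or.inr ⟨h2.symm, h1.symm⟩
      · exact absurd (h1.trans h2.symm) hw₁₂
end
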